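/- arXiv:1012.0933 — 9 statements merged into one kernel-verified Lean document; each statement's English description precedes it below -/
import Mathlib

section
/- If I ⊆ S is a prime homogeneous ideal containing no linear form, then I has no linear n-th syzygy of rank at most n+1. -/
open MvPolynomial Finset

noncomputable section

variable {k : Type*} [Field k] {N : ℕ}

/-- The Koszul sign of the variable `i` inside the subset `s`: `(−1)^{p}` where `p` is
the number of elements of `s` strictly smaller than `i`. -/
def ksgn (s : Finset (Fin N)) (i : Fin N) : ℤ := (-1) ^ (s.filter (· < i)).card

/-- Chain data for an element of `Λ^{n+1}V ⊗ V` (with `V = S₁` the space of linear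
forms of `S = k[x₀,…,x_{N−1}]`), expressed in the standard monomial basis of
`Λ^{n+1}V`: a family of linear forms indexed by the `(n+1)`-element subsets of the
variables. -/
def IsLinChain (n : ℕ) (c : Finset (Fin N) → MvPolynomial (Fin N) k) : Prop :=
  ∀ s, (c s).IsHomogeneous 1 ∧ (s.card ≠ n + 1 → c s = 0)

/-- `c` represents a cycle for the middle homology of
`Λ^{n+2}V → Λ^{n+1}V ⊗ V → Λ^{n}V ⊗ (S/I)₂`, i.e. the image of `c` under the Koszul
differential lies in `Λ^{n}V ⊗ I₂`. -/
def IsLinCycle (I : Ideal (MvPolynomial (Fin N) k)) (n : ℕ)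
    (c : Finset (Fin N) → MvPolynomial (Fin N) k) : Prop :=
  IsLinChain n c ∧ ∀ t : Finset (Fin N), t.card = n →
    (∑ i ∈ tᶜ, ksgn (insert i t) i • (X i * c (insert i t))) ∈ I

/-- `c` is the Koszul boundary of an element of `Λ^{n+2}V`. -/
def IsLinBoundary (n : ℕ) (c : Finset (Fin N) → MvPolynomial (Fin N) k) : Prop :=
  ∃ b : Finset (Fin N) → k, ∀ s : Finset (Fin N), s.card = n + 1 →
    c s = ∑ i ∈ sᶜ, ksgn (insert i s) i • (b (insert i s) • X i)

/-- `c` gives a nonzero class in `Tor_{n+1}(S/I,k)_{n+2}`,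
i.e. a linear `n`-th syzygy of `I`. -/
def IsLinSyzygy (I : Ideal (MvPolynomial (Fin N) k)) (n : ℕ)
    (c : Finset (Fin N) → MvPolynomial (Fin N) k) : Prop :=
  IsLinCycle I n c ∧ ¬ IsLinBoundary n c

/-- `b_{n+1,n+2}(S/I) ≠ 0`: the space of linear `n`-th syzygies is nonzero. -/
def HasLinSyzygy (I : Ideal (MvPolynomial (Fin N) k)) (n : ℕ) : Prop :=
  ∃ c, IsLinSyzygy I n c

/-- `2LP(S/I) = m`: `m` is the largest `i` with `b_{i,i+1}(S/I) ≠ 0`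
(recall `b_{n+1,n+2} ≠ 0` iff there is a linear `n`-th syzygy). -/
def TwoLPeq (I : Ideal (MvPolynomial (Fin N) k)) (m : ℕ) : Prop :=
  (m ≠ 0 ∧ HasLinSyzygy I (m - 1)) ∧ ∀ j : ℕ, m - 1 < j → ¬ HasLinSyzygy I j

/-- The coefficient of the variable `x_i` in a linear form. -/
def coeffOf (i : Fin N) (w : MvPolynomial (Fin N) k) : k := coeff (Finsupp.single i 1) w

/-- The chain `c` lies in `Λ^{n+1}W ⊗ V` for the subspace `W ≤ V = S₁`: every linear
functional on `V` vanishing on `W` contracts `c` to zero. -/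
def SupportedOn (W : Submodule k (MvPolynomial (Fin N) k)) (n : ℕ)
    (c : Finset (Fin N) → MvPolynomial (Fin N) k) : Prop :=
  ∀ a : Fin N → k, (∀ w ∈ W, ∑ i, a i * coeffOf i w = 0) →
    ∀ t : Finset (Fin N), t.card = n →
      ∑ i ∈ tᶜ, ksgn (insert i t) i • (a i • c (insert i t)) = 0

/-- The class of the cycle `c` can be represented by a cycle lying in
`Λ^{n+1}W ⊗ V`. -/
def RepresentedOn (I : Ideal (MvPolynomial (Fin N) k)) (n : ℕ)
    (c : Finset (Fin N) → MvPolynomial (Fin N) k)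
    (W : Submodule k (MvPolynomial (Fin N) k)) : Prop :=
  ∃ c', IsLinCycle I n c' ∧ SupportedOn W n c' ∧
    IsLinBoundary n (fun s => c s - c' s)

/-- The (nonzero) class of `c` has rank `r`: it is represented on some `r`-dimensional
subspace of `V = S₁` and on no subspace of smaller dimension. -/
def SyzygyRank (I : Ideal (MvPolynomial (Fin N) k)) (n : ℕ)
    (c : Finset (Fin N) → MvPolynomial (Fin N) k) (r : ℕ) : Prop :=
  (∃ W ≤ homogeneousSubmodule (Fin N) k 1,
      Module.finrank k W = r ∧ RepresentedOn I n c W) ∧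
  ∀ W ≤ homogeneousSubmodule (Fin N) k 1,
      RepresentedOn I n c W → r ≤ Module.finrank k W

/-- `I` has a linear `n`-th syzygy of rank `r`. -/
def HasLinSyzygyOfRank (I : Ideal (MvPolynomial (Fin N) k)) (n r : ℕ) : Prop :=
  ∃ c, IsLinSyzygy I n c ∧ SyzygyRank I n c r

/-- `I` has a linear `n`-th syzygy of rank at most `r`. -/
def HasLinSyzygyOfRankLE (I : Ideal (MvPolynomial (Fin N) k)) (n r : ℕ) : Prop :=
  ∃ c, IsLinSyzygy I n c ∧ ∃ W ≤ homogeneousSubmodule (Fin N) k 1,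
    Module.finrank k W ≤ r ∧ RepresentedOn I n c W

/-- A homogeneous ideal. -/
def IsHomogeneousIdeal (I : Ideal (MvPolynomial (Fin N) k)) : Prop :=
  ∀ f ∈ I, ∀ m : ℕ, homogeneousComponent m f ∈ I

/-- A matrix of linear forms. -/
def IsLinearMatrix {p q : ℕ} (M : Matrix (Fin p) (Fin q) (MvPolynomial (Fin N) k)) : Prop :=
  ∀ i j, (M i j).IsHomogeneous 1

/-- A matrix of linear forms is 1-generic if all its generalized entries `uMv`
(for nonzero row and column vectors `u`, `v` over `k`) are nonzero. -/
def OneGeneric {p q : ℕ} (M : Matrix (Fin p) (Fin q) (MvPolynomial (Fin N) k)) : Prop :=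
  IsLinearMatrix M ∧ ∀ u : Fin p → k, u ≠ 0 → ∀ v : Fin q → k, v ≠ 0 →
    (∑ i, ∑ j, u i • v j • M i j) ≠ 0

/-- All 2×2 minors of `M` belong to `I`. -/
def MinorsIn {p q : ℕ} (M : Matrix (Fin p) (Fin q) (MvPolynomial (Fin N) k))
    (I : Ideal (MvPolynomial (Fin N) k)) : Prop :=
  ∀ i i' j j', M i j * M i' j' - M i j' * M i' j ∈ I

end

/-
Let the class be represented by a cycle `c'` in `Λ^{n+1}W ⊗ V` with `dim W ≤ n + 1`. Since
`Λ^{n+1}W` is at most a line, all coefficients `c' s` are multiples `λ_s v` of one linear form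
`v`: row-reducing the coordinate functionals on `W` gives at most `n + 1` pivot variables `J`,
and contracting with the functionals vanishing on `W` rewrites `c' s` through sets closer to
`J`. The cycle condition then reads `L_t v ∈ I` with `L_t = ∑ ± λ_{t ∪ x} x` linear; as `I` is
prime and contains no linear form, every `L_t` vanishes, so `c' = 0` and `c` is a boundary.
-/

open MvPolynomial Finset Module Submodule

theorem exists_finset_card_le_finrank_forall_mem_span {K V ι : Type*} [DivisionRing K]
    [AddCommGroup V] [Module K V] [FiniteDimensional K V] (v : ι → V) :
    ∃ J : Finset ι, J.card ≤ finrank K V ∧ ∀ i, v i ∈ span K (v '' J) := by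
  obtain ⟨b, -, -, hspan, hli⟩ :=
    exists_linearIndepOn_extension (linearIndepOn_empty K v) (Set.empty_subset Set.univ)
  have : Finite b := hli.finite
  have : Fintype b := Fintype.ofFinite b
  refine ⟨b.toFinset, ?_, fun i => by simpa using hspan ⟨i, trivial, rfl⟩⟩
  simpa using hli.fintype_card_le_finrank

theorem exists_eq_smul_of_forall_mem_span_singleton {R M α : Type*} [Semiring R]
    [AddCommMonoid M] [Module R M] {p : α → Prop} {f : α → M} {v : M}
    (h : ∀ a, p a → f a ∈ span R {v}) : ∃ r : α → R, ∀ a, p a → f a = r a • v := by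
  classical
  refine ⟨fun a => if ha : p a then (mem_span_singleton.1 (h a ha)).choose else 0,
    fun a ha => ?_⟩
  simp only [dif_pos ha]
  exact (mem_span_singleton.1 (h a ha)).choose_spec.symm

section

variable {k : Type*} [Field k] {N : ℕ}

theorem ksgn_mul_self (s : Finset (Fin N)) (i : Fin N) : ksgn s i * ksgn s i = 1 := by
  rw [ksgn, ← pow_add, Even.neg_one_pow ⟨_, rfl⟩]

theorem coeffOf_sum_smul_X (u : Finset (Fin N)) (b : Fin N → k) (i : Fin N) :
    coeffOf i (∑ x ∈ u, b x • X x) = if i ∈ u then b i else 0 := by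
  simp [coeffOf, coeff_sum, coeff_X, Finsupp.single_left_inj one_ne_zero]

theorem isHomogeneous_sum_smul_X (u : Finset (Fin N)) (b : Fin N → k) :
    (∑ x ∈ u, b x • (X x : MvPolynomial (Fin N) k)).IsHomogeneous 1 := by
  rw [← mem_homogeneousSubmodule]
  exact sum_mem fun x _ => smul_mem _ _ (isHomogeneous_X k x)

theorem finiteDimensional_of_le_homogeneousSubmodule {W : Submodule k (MvPolynomial (Fin N) k)}
    {m : ℕ} (hW : W ≤ homogeneousSubmodule (Fin N) k m) : FiniteDimensional k W :=
  have : FiniteDimensional k (homogeneousSubmodule (Fin N) k m) :=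
    Module.Finite.iff_fg.2 (homogeneousSubmodule_fg _ _ m)
  Submodule.finiteDimensional_of_le hW

theorem exists_pivots_of_finiteDimensional (W : Submodule k (MvPolynomial (Fin N) k))
    [FiniteDimensional k W] :
    ∃ J : Finset (Fin N), J.card ≤ finrank k W ∧ ∀ i ∉ J, ∃ a : Fin N → k,
      (∀ w ∈ W, ∑ j, a j * coeffOf j w = 0) ∧ a i = 1 ∧
      ∀ j ∉ J, j ≠ i → a j = 0 := by
  classical
  let f : Fin N → Dual k W := fun j => (lcoeff k (Finsupp.single j 1)).comp W.subtype
  obtain ⟨J, hJ, hspan⟩ := exists_finset_card_le_finrank_forall_mem_span (K := k) f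
  refine ⟨J, Subspace.dual_finrank_eq (K := k) (V := W) ▸ hJ, fun i hi => ?_⟩
  obtain ⟨l, hlJ, hl⟩ := (Finsupp.mem_span_image_iff_linearCombination k).1 (hspan i)
  have hl0 : ∀ j ∉ J, l j = 0 := fun j hj => Finsupp.notMem_support_iff.1 fun h => hj (hlJ h)
  refine ⟨Pi.single i 1 - ⇑l, fun w hw => ?_, by simp [hl0 i hi], fun j hj hji => by
    simp [hji, hl0 j hj]⟩
  have hw := LinearMap.congr_fun hl ⟨w, hw⟩
  simp only [Finsupp.linearCombination_apply, zero_smul, implies_true, Finsupp.sum_fintype,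
    LinearMap.coe_sum, LinearMap.coe_smul, LinearMap.coe_comp, coe_subtype, Finset.sum_apply,
    Pi.smul_apply, Function.comp_apply, lcoeff_apply, smul_eq_mul, f] at hw
  simp [sub_mul, Finset.sum_sub_distrib, Pi.single_apply, coeffOf, hw]

namespace SupportedOn

variable {W : Submodule k (MvPolynomial (Fin N) k)} {n : ℕ}
  {c : Finset (Fin N) → MvPolynomial (Fin N) k}

-- The contraction of `c` with `a` at `s.erase i` is a relation between `c s` and these values.
theorem mem_of_exchange (hc : SupportedOn W n c) {a : Fin N → k}
    (ha : ∀ w ∈ W, ∑ j, a j * coeffOf j w = 0) {s : Finset (Fin N)} (hs : s.card = n + 1)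
    {i : Fin N} (hi : i ∈ s) (hai : a i = 1) {P : Submodule k (MvPolynomial (Fin N) k)}
    (hP : ∀ x ∉ s, a x ≠ 0 → c (insert x (s.erase i)) ∈ P) : c s ∈ P := by
  have hrel := hc a ha (s.erase i) (by rw [card_erase_of_mem hi, hs, Nat.add_sub_cancel])
  rw [← add_sum_erase _ _ (mem_compl.2 (notMem_erase i s)), hai, one_smul,
    insert_erase hi] at hrel
  have hrest : ∑ x ∈ (s.erase i)ᶜ.erase i,
      ksgn (insert x (s.erase i)) x • (a x • c (insert x (s.erase i))) ∈ P := by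
    refine sum_mem fun x hx => zsmul_mem ?_ _
    obtain ⟨hxi, hxs⟩ := mem_erase.1 hx
    by_cases hax : a x = 0
    · simp [hax]
    · exact smul_mem _ _ (hP x (fun h => mem_compl.1 hxs (mem_erase.2 ⟨hxi, h⟩)) hax)
  have hsgn : ksgn s i • c s ∈ P := by
    rw [eq_neg_of_add_eq_zero_left hrel]
    exact neg_mem hrest
  have hs' := zsmul_mem hsgn (ksgn s i)
  rwa [smul_smul, ksgn_mul_self, one_smul] at hs'

theorem mem_span_singleton (hc : SupportedOn W n c) {J : Finset (Fin N)} (hJ : J.card ≤ n + 1)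
    (hpiv : ∀ i ∉ J, ∃ a : Fin N → k,
      (∀ w ∈ W, ∑ j, a j * coeffOf j w = 0) ∧ a i = 1 ∧ ∀ j ∉ J, j ≠ i → a j = 0)
    {s : Finset (Fin N)} (hs : s.card = n + 1) : c s ∈ span k {c J} := by
  induction hd : (s \ J).card using Nat.strong_induction_on generalizing s with
  | _ d ih =>
  rcases (s \ J).eq_empty_or_nonempty with hsJ | ⟨i, hi⟩
  · rw [eq_of_subset_of_card_le (sdiff_eq_empty_iff_subset.1 hsJ) (hJ.trans hs.ge)]
    exact mem_span_singleton_self _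
  obtain ⟨his, hiJ⟩ := mem_sdiff.1 hi
  obtain ⟨a, ha, hai, ha0⟩ := hpiv i hiJ
  refine hc.mem_of_exchange ha hs his hai fun x hxs hax => ?_
  have hxJ : x ∈ J := by
    by_contra hxJ
    exact hax (ha0 x hxJ (ne_of_mem_of_not_mem his hxs).symm)
  have hdiff : insert x (s.erase i) \ J = (s \ J).erase i := by
    rw [insert_sdiff_of_mem _ hxJ, erase_sdiff_comm]
  refine ih _ ?_ (by rw [card_insert_of_notMem fun h => hxs (mem_of_mem_erase h),
    card_erase_of_mem his, hs, Nat.add_sub_cancel]) rfl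
  rw [hdiff, ← hd]
  exact card_erase_lt_of_mem hi

theorem exists_mem_span_singleton [FiniteDimensional k W] (hc : SupportedOn W n c)
    (hW : finrank k W ≤ n + 1) : ∃ J, ∀ s, s.card = n + 1 → c s ∈ span k {c J} :=
  let ⟨J, hJ, hpiv⟩ := exists_pivots_of_finiteDimensional W
  ⟨J, fun _ hs => hc.mem_span_singleton (hJ.trans hW) hpiv hs⟩

end SupportedOn

theorem eq_zero_or_eq_zero_of_mul_mem {I : Ideal (MvPolynomial (Fin N) k)} (hI : I.IsPrime)
    (hnolin : ∀ f ∈ I, f.IsHomogeneous 1 → f = 0) {f g : MvPolynomial (Fin N) k}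
    (hf : f.IsHomogeneous 1) (hg : g.IsHomogeneous 1) (hfg : f * g ∈ I) : f = 0 ∨ g = 0 :=
  (hI.mem_or_mem hfg).imp (hnolin f · hf) (hnolin g · hg)

theorem IsLinCycle.eq_zero_of_eq_smul {I : Ideal (MvPolynomial (Fin N) k)} (hI : I.IsPrime)
    (hnolin : ∀ f ∈ I, f.IsHomogeneous 1 → f = 0) {n : ℕ}
    {c : Finset (Fin N) → MvPolynomial (Fin N) k} (hc : IsLinCycle I n c)
    {v : MvPolynomial (Fin N) k} (hv : v.IsHomogeneous 1) {lam : Finset (Fin N) → k}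
    (hlam : ∀ s, s.card = n + 1 → c s = lam s • v) {s : Finset (Fin N)}
    (hs : s.card = n + 1) : c s = 0 := by
  by_cases hv0 : v = 0
  · rw [hlam s hs, hv0, smul_zero]
  obtain ⟨i, hi⟩ : s.Nonempty := card_pos.1 (by omega)
  set t := s.erase i
  have ht : t.card = n := by rw [card_erase_of_mem hi, hs, Nat.add_sub_cancel]
  set L : MvPolynomial (Fin N) k :=
    ∑ x ∈ tᶜ, ((ksgn (insert x t) x : k) * lam (insert x t)) • X x
  have hfactor : ∑ x ∈ tᶜ, ksgn (insert x t) x • (X x * c (insert x t)) = L * v := by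
    rw [sum_mul]
    refine sum_congr rfl fun x hx => ?_
    rw [hlam _ (by rw [card_insert_of_notMem (mem_compl.1 hx), ht]), mul_smul_comm,
      ← Int.cast_smul_eq_zsmul k, smul_smul, smul_mul_assoc]
  have hL : L = 0 := (eq_zero_or_eq_zero_of_mul_mem hI hnolin (isHomogeneous_sum_smul_X _ _) hv
    (hfactor ▸ hc.2 t ht)).resolve_right hv0
  have hcoeff := congrArg (coeffOf i) hL
  rw [coeffOf_sum_smul_X, if_pos (mem_compl.2 (notMem_erase i s)), insert_erase hi] at hcoeff
  have hsgn : (ksgn s i : k) * ksgn s i = 1 := by rw [← Int.cast_mul, ksgn_mul_self, Int.cast_one]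
  have hlam0 : lam s = 0 := by
    simpa [coeffOf, left_ne_zero_of_mul_eq_one hsgn] using hcoeff
  rw [hlam s hs, hlam0, zero_smul]

theorem IsLinBoundary.congr {n : ℕ} {c c' : Finset (Fin N) → MvPolynomial (Fin N) k}
    (h : ∀ s, s.card = n + 1 → c s = c' s) (hc : IsLinBoundary n c) : IsLinBoundary n c' :=
  let ⟨b, hb⟩ := hc
  ⟨b, fun s hs => h s hs ▸ hb s hs⟩

end

theorem no_low_rank_linear_syzygy_general {k : Type*} [Field k] {N : ℕ}
    (I : Ideal (MvPolynomial (Fin N) k)) (hprime : I.IsPrime)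
    (hnolin : ∀ f ∈ I, f.IsHomogeneous 1 → f = 0) (n : ℕ) :
    ¬ HasLinSyzygyOfRankLE I n (n + 1) := by
  rintro ⟨c, ⟨-, hc⟩, W, hW, hdim, c', hc', hsupp, hdiff⟩
  have : FiniteDimensional k W := finiteDimensional_of_le_homogeneousSubmodule hW
  obtain ⟨J, hJ⟩ := hsupp.exists_mem_span_singleton hdim
  obtain ⟨lam, hlam⟩ := exists_eq_smul_of_forall_mem_span_singleton hJ
  refine hc (hdiff.congr fun s hs => ?_)
  rw [hc'.eq_zero_of_eq_smul hprime hnolin (hc'.1 J).1 hlam hs, sub_zero]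

theorem no_low_rank_linear_syzygy {k : Type*} [Field k] {N : ℕ}
    (I : Ideal (MvPolynomial (Fin N) k)) (hprime : I.IsPrime)
    (hhom : IsHomogeneousIdeal I)
    (hnolin : ∀ f ∈ I, f.IsHomogeneous 1 → f = 0) (n : ℕ) :
    ¬ HasLinSyzygyOfRankLE I n (n + 1) :=
  no_low_rank_linear_syzygy_general I hprime hnolin n
end

section
/- Let Δ be an oriented n-dimensional pseudomanifold on d vertices. After rescaling the variables y_σ by suitable signs determined by the orientation of Δ (choosing the oriented basis of Koszul cycles to agree with the orientation of Δ), the specialization J(Δ) of J_{d−n−1} equals the ideal generated by the binomials x_i y_σ − x_j y_τ over all pairs of facets σ, τ ∈ Δ_n and vertices i ∈ σ, j ∈ τ with σ∖{i} = τ∖{j}. -/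
open Finset

/-- The Koszul/simplicial sign of the vertex `i` inside the subset `s`: `(−1)^p` where
`p` is the number of elements of `s` strictly smaller than `i`. -/
def simpSgn {d : ℕ} (s : Finset (Fin d)) (i : Fin d) : ℤ := (-1) ^ (s.filter (· < i)).card

/-- An oriented pseudomanifold of dimension `n` on the `d` vertices `{0,…,d−1}`:
a collection of facets, each an `(n+1)`-element subset of the vertices, equipped with
orientations (recorded, relative to the standard orientation coming from the ordering
of the vertices, by a sign `sgn σ = ±1`), such that every `n`-element subset of the
vertices lies in exactly zero or two facets, in the latter case the induced
orientations cancelling, and whose dual graph (a vertex for each facet, an edge when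
two facets share an `n`-element subset) is connected. -/
structure OrientedPseudomanifold (n d : ℕ) where
  facets : Finset (Finset (Fin d))
  card_eq : ∀ σ ∈ facets, σ.card = n + 1
  sgn : Finset (Fin d) → ℤ
  sgn_pm : ∀ σ ∈ facets, sgn σ = 1 ∨ sgn σ = -1
  ridge : ∀ t : Finset (Fin d), t.card = n →
    (facets.filter (fun σ => t ⊆ σ)).card = 0 ∨ (facets.filter (fun σ => t ⊆ σ)).card = 2
  cancel : ∀ t : Finset (Fin d), t.card = n →
    ∑ σ ∈ facets.filter (fun σ => t ⊆ σ), sgn σ * ∑ i ∈ σ \ t, simpSgn σ i = 0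
  connected : (SimpleGraph.fromRel (fun (σ τ : {x // x ∈ facets}) =>
    ((σ : Finset (Fin d)) ∩ (τ : Finset (Fin d))).card = n)).Connected



open MvPolynomial

noncomputable section

variable {n d : ℕ} (k : Type*) [Field k] (Δ : OrientedPseudomanifold n d)

/-- The variables of the ring `S = k[x₁,…,x_d, y_σ (σ ∈ Δ_n)]`. -/
abbrev PMVars (Δ : OrientedPseudomanifold n d) : Type := Fin d ⊕ {x // x ∈ Δ.facets}

/-- The multidegree (weight) of a variable: `deg x_i = e_i`,
`deg y_σ = wt(σ) = e_0 − Σ_{j∈σ} e_j`, in `ℤ^{d+1}` (coordinate `0` is `e_0`, and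
coordinate `i.succ` is `e_i`). -/
def wtv : PMVars Δ → (Fin (d + 1) →₀ ℤ) :=
  Sum.elim (fun i => Finsupp.single i.succ 1)
    (fun σ => Finsupp.single 0 1 - ∑ j ∈ (σ : Finset (Fin d)), Finsupp.single j.succ 1)

/-- `e₀ ∈ ℤ^{d+1}`. -/
def e0 (d : ℕ) : Fin (d + 1) →₀ ℤ := Finsupp.single 0 1

/-- The toric ideal `I_𝒜 ⊆ S` of the point configuration
`𝒜 = {e_1,…,e_d} ∪ {wt(σ) : σ ∈ Δ_n}`: the kernel of the `k`-algebra map to the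
Laurent polynomial ring sending each variable to the monomial with exponent its
weight. -/
def toricIdealPM : Ideal (MvPolynomial (PMVars Δ) k) :=
  RingHom.ker (MvPolynomial.aeval (fun v =>
    (AddMonoidAlgebra.single (wtv Δ v) 1 : AddMonoidAlgebra k (Fin (d + 1) →₀ ℤ)))).toRingHom

/-- The binomial ideal `J(Δ)`, generated by the binomials `x_i y_σ − x_j y_τ` over all
pairs of facets `σ, τ` and vertices `i ∈ σ`, `j ∈ τ` with `σ∖{i} = τ∖{j}`. -/
def JofPM : Ideal (MvPolynomial (PMVars Δ) k) :=
  Ideal.span {p | ∃ (σ τ : {x // x ∈ Δ.facets}) (i j : Fin d),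
    i ∈ (σ : Finset (Fin d)) ∧ j ∈ (τ : Finset (Fin d)) ∧
    (σ : Finset (Fin d)).erase i = (τ : Finset (Fin d)).erase j ∧
    p = X (Sum.inl i) * X (Sum.inr σ) - X (Sum.inl j) * X (Sum.inr τ)}

/-- The product of the `x`-variables. -/
def xProd : MvPolynomial (PMVars Δ) k := ∏ i : Fin d, X (Sum.inl i)

/-- `J_Δ = J(Δ) : (x₁⋯x_d)^∞`, the saturation of `J(Δ)` at the product of the
`x`-variables. -/
def JsatPM : Ideal (MvPolynomial (PMVars Δ) k) :=
  ⨆ m : ℕ, Submodule.colon (JofPM k Δ) (Ideal.span {xProd k Δ ^ m})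

/-- The defining ideal `L_Δ` of the Rees algebra of the Stanley–Reisner ideal of the
Alexander dual of `Δ`: the kernel of the map `S → k[x₁,…,x_d,t]`, `x_i ↦ x_i`,
`y_σ ↦ t·∏_{i∉σ} x_i` (the extra variable `t` is `X none`). -/
def LofPM : Ideal (MvPolynomial (PMVars Δ) k) :=
  RingHom.ker (MvPolynomial.aeval (Sum.elim
    (fun i => (X (some i) : MvPolynomial (Option (Fin d)) k))
    (fun (σ : {x // x ∈ Δ.facets}) => X none * ∏ i ∈ (σ : Finset (Fin d))ᶜ, X (some i)))).toRingHom

/-- The faces of the simplicial complex `Δ_m(𝒜)` (for `m = e₀`), per Hochster's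
formula: subsets `I` of the point configuration `𝒜` (indexed by the variables) with
`e₀ − Σ_{a ∈ I} a` in the affine semigroup `ℕ𝒜`. -/
def facesDeltaE0 : Set (Finset (PMVars Δ)) :=
  {I | (e0 d - ∑ v ∈ I, wtv Δ v) ∈ AddSubmonoid.closure (Set.range (wtv Δ))}

/-- The faces of `Δ`, regarded as the simplicial complex generated by its facets. -/
def facesPM (Δ : OrientedPseudomanifold n d) : Set (Finset (Fin d)) :=
  {t | ∃ σ ∈ Δ.facets, t ⊆ σ}

/-- The geometric realization of an abstract simplicial complex with (finite) vertex
set `V` and face set `K`, as a subspace of `V → ℝ`. -/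
def realization (V : Type*) [Fintype V] (K : Set (Finset V)) : Set (V → ℝ) :=
  {f | (∀ v, 0 ≤ f v) ∧ (∑ v, f v = 1) ∧ ∃ s ∈ K, ∀ v, f v ≠ 0 → v ∈ s}

end

noncomputable section

variable {n d : ℕ} (k : Type*) [Field k] (Δ : OrientedPseudomanifold n d)

/-- The polynomial ring `k[x₁,…,x_d, y_J (|J| = d−n−1)]`, the ambient ring of the
presentation ideal `J_{d−n−1}` of the symmetric algebra of the `(d−n−2)`-nd Koszul
cycles. -/
abbrev BigRing (k : Type*) [Field k] (n d : ℕ) : Type _ :=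
  MvPolynomial (Fin d ⊕ {J : Finset (Fin d) // J.card = d - (n + 1)}) k

/-- The `y`-variable `y_J` of the big ring (zero if `J` does not have the right
cardinality). -/
def yBig (J : Finset (Fin d)) : BigRing k n d :=
  if h : J.card = d - (n + 1) then X (Sum.inr ⟨J, h⟩) else 0

/-- The ideal `J_{d−n−1}`, generated by the elements
`z_I = Σ_{j∈I} (−1)^{pos(j,I)+1} x_j y_{I∖j}` over the subsets `I` of cardinality
`d−n`. -/
def JBigIdeal : Ideal (BigRing k n d) :=
  Ideal.span {p | ∃ I : Finset (Fin d), I.card = d - n ∧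
    p = ∑ j ∈ I, simpSgn I j • (X (Sum.inl j) * yBig k (I.erase j))}

/-- The specialization map determined by signs `ε`: it fixes the `x`-variables, sends
`y_J` to `ε(σ) · y_σ` when the complement `σ = {1,…,d}∖J` is a facet of `Δ`, and
sends `y_J` to `0` otherwise. -/
def specializePM (ε : {x // x ∈ Δ.facets} → ℤ) :
    BigRing k n d →ₐ[k] MvPolynomial (PMVars Δ) k :=
  MvPolynomial.aeval (Sum.elim (fun i => X (Sum.inl i))
    (fun J => if h : (J : Finset (Fin d))ᶜ ∈ Δ.facets then
        ε ⟨(J : Finset (Fin d))ᶜ, h⟩ • X (Sum.inr ⟨(J : Finset (Fin d))ᶜ, h⟩) else 0))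

/-!
For a set `I` of `d − n` vertices, the specialization kills every term `x_a y_{I∖a}` of the
Koszul cycle `z_I` except those for which `(I∖a)ᶜ = Iᶜ ∪ {a}` is a facet. Either there are none,
or `Iᶜ` is a ridge of `Δ` and there are exactly two, `σ = Iᶜ ∪ {i}` and `τ = Iᶜ ∪ {j}`. With the
signs `ε` below, the two surviving coefficients are opposite units precisely because `σ` and `τ`
induce opposite orientations on `Iᶜ`, so the image of `z_I` is a unit multiple of
`x_i y_σ − x_j y_τ`. Conversely every such binomial with `σ ≠ τ` arises in this way from
`I = (σ∖i)ᶜ`.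
-/

def koszulCycle (I : Finset (Fin d)) : BigRing k n d :=
  ∑ j ∈ I, simpSgn I j • (X (Sum.inl j) * yBig k (I.erase j))

/- The factor `(-1)^{Σσ}` turns the Koszul sign of `i` in the complement of a ridge `t` into its
sign in `σ = t ∪ {i}`, up to a factor depending on `t` only (`simpSgn_compl_mul_facetSign_insert`),
which is where the orientation condition `Δ.cancel` applies. -/
def facetSign (σ : {x // x ∈ Δ.facets}) : ℤ :=
  Δ.sgn σ * (-1) ^ ∑ v ∈ (σ : Finset (Fin d)), (v : ℕ)

lemma isUnit_simpSgn (s : Finset (Fin d)) (i : Fin d) : IsUnit (simpSgn s i) :=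
  isUnit_neg_one.pow _

lemma simpSgn_mul_self (s : Finset (Fin d)) (i : Fin d) : simpSgn s i * simpSgn s i = 1 := by
  rw [simpSgn, ← pow_add, ← two_mul, pow_mul, neg_one_sq, one_pow]

lemma simpSgn_insert_self (t : Finset (Fin d)) (i : Fin d) :
    simpSgn (insert i t) i = simpSgn t i := by
  rw [simpSgn, simpSgn, filter_insert, if_neg (lt_irrefl i)]

lemma simpSgn_compl_mul_simpSgn (t : Finset (Fin d)) (i : Fin d) :
    simpSgn tᶜ i * simpSgn t i = (-1) ^ (i : ℕ) := by
  rw [simpSgn, simpSgn, ← pow_add, ← card_union_of_disjoint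
    (disjoint_filter_filter disjoint_compl_left), ← filter_union, ← Fin.card_Iio i]
  congr 2
  ext a
  by_cases a ∈ t <;> simp_all

lemma facetSign_eq_one_or_neg_one (σ : {x // x ∈ Δ.facets}) :
    facetSign Δ σ = 1 ∨ facetSign Δ σ = -1 := by
  rw [← Int.isUnit_iff, facetSign]
  exact (Int.isUnit_iff.2 (Δ.sgn_pm _ σ.2)).mul (isUnit_neg_one.pow _)

lemma simpSgn_compl_mul_facetSign_insert {t : Finset (Fin d)} {i : Fin d} (hi : i ∉ t)
    (hσ : insert i t ∈ Δ.facets) :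
    simpSgn tᶜ i * facetSign Δ ⟨insert i t, hσ⟩ =
      (-1) ^ (∑ v ∈ t, (v : ℕ)) * (Δ.sgn (insert i t) * simpSgn (insert i t) i) := by
  have h₁ := simpSgn_compl_mul_simpSgn t i
  have h₂ := simpSgn_mul_self tᶜ i
  rw [facetSign, sum_insert hi, pow_add, simpSgn_insert_self]
  linear_combination (-(simpSgn tᶜ i * Δ.sgn (insert i t) * (-1) ^ (∑ v ∈ t, (v : ℕ)))) * h₁ +
    ((-1) ^ (∑ v ∈ t, (v : ℕ)) * Δ.sgn (insert i t) * simpSgn t i) * h₂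

namespace OrientedPseudomanifold

variable {t : Finset (Fin d)} {i j : Fin d}

lemma card_eq_of_insert_mem_facets (hi : i ∉ t) (hσ : insert i t ∈ Δ.facets) : t.card = n := by
  have := Δ.card_eq _ hσ
  rw [card_insert_of_notMem hi] at this
  omega

lemma card_filter_superset_eq_two (hi : i ∉ t) (hσ : insert i t ∈ Δ.facets) :
    (Δ.facets.filter (t ⊆ ·)).card = 2 := by
  refine (Δ.ridge t (Δ.card_eq_of_insert_mem_facets hi hσ)).resolve_left fun h => ?_
  rw [card_eq_zero] at h
  simpa [h] using mem_filter.2 ⟨hσ, subset_insert i t⟩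

lemma exists_insert_mem_facets_ne (hi : i ∉ t) (hσ : insert i t ∈ Δ.facets) :
    ∃ j, j ∉ t ∧ j ≠ i ∧ insert j t ∈ Δ.facets := by
  obtain ⟨ρ, hρ, hρσ⟩ :=
    exists_mem_ne (by rw [Δ.card_filter_superset_eq_two hi hσ]; omega) (insert i t)
  obtain ⟨hρ, htρ⟩ := mem_filter.1 hρ
  have hcard : ρ.card = t.card + 1 := by
    rw [Δ.card_eq _ hρ, Δ.card_eq_of_insert_mem_facets hi hσ]
  obtain ⟨j, hjρ, hjt⟩ :=
    exists_of_ssubset (ssubset_of_subset_of_ne htρ fun h => by simp [h] at hcard)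
  have hρ_eq : insert j t = ρ := eq_of_subset_of_card_le (insert_subset hjρ htρ)
    (by rw [card_insert_of_notMem hjt]; omega)
  refine ⟨j, hjt, fun hji => hρσ ?_, hρ_eq ▸ hρ⟩
  rw [← hρ_eq, hji]

lemma filter_superset_eq_pair (hi : i ∉ t) (hij : i ≠ j) (hσ : insert i t ∈ Δ.facets)
    (hτ : insert j t ∈ Δ.facets) :
    Δ.facets.filter (t ⊆ ·) = {insert i t, insert j t} := by
  refine (eq_of_subset_of_card_le ?_ ?_).symm
  · simp [insert_subset_iff, hσ, hτ, subset_insert]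
  · rw [Δ.card_filter_superset_eq_two hi hσ, card_pair ((insert_inj hi).not.2 hij)]

lemma sgn_mul_simpSgn_add_eq_zero (hi : i ∉ t) (hj : j ∉ t) (hij : i ≠ j)
    (hσ : insert i t ∈ Δ.facets) (hτ : insert j t ∈ Δ.facets) :
    Δ.sgn (insert i t) * simpSgn (insert i t) i + Δ.sgn (insert j t) * simpSgn (insert j t) j
      = 0 := by
  have h := Δ.cancel t (Δ.card_eq_of_insert_mem_facets hi hσ)
  rwa [Δ.filter_superset_eq_pair hi hij hσ hτ, sum_pair ((insert_inj hi).not.2 hij),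
    insert_sdiff_cancel hi, insert_sdiff_cancel hj, sum_singleton, sum_singleton] at h

end OrientedPseudomanifold

lemma Ideal.zsmul_mem_iff_of_isUnit {R : Type*} [CommRing R] (I : Ideal R) {c : ℤ}
    (hc : IsUnit c) {x : R} : c • x ∈ I ↔ x ∈ I := by
  obtain ⟨u, rfl⟩ := hc
  exact I.smul_mem_iff' u

variable {Δ}

lemma specializePM_yBig (ε : {x // x ∈ Δ.facets} → ℤ) (J : Finset (Fin d)) :
    specializePM k Δ ε (yBig k J) =
      if h : Jᶜ ∈ Δ.facets then ε ⟨Jᶜ, h⟩ • X (Sum.inr ⟨Jᶜ, h⟩) else 0 := by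
  by_cases hJ : J.card = d - (n + 1)
  · simp [yBig, hJ, specializePM]
  · have hJc : Jᶜ ∉ Δ.facets := fun h => hJ <| by
      have hcard := Δ.card_eq _ h
      have hle := card_le_univ J
      simp only [card_compl, Fintype.card_fin] at hcard hle
      omega
    simp [yBig, hJ, hJc]

lemma specializePM_koszulCycle_compl (ε : {x // x ∈ Δ.facets} → ℤ) (t : Finset (Fin d)) :
    specializePM k Δ ε (koszulCycle k tᶜ) = ∑ a ∈ tᶜ, if h : insert a t ∈ Δ.facets then
      (simpSgn tᶜ a * ε ⟨insert a t, h⟩) • (X (Sum.inl a) * X (Sum.inr ⟨insert a t, h⟩))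
      else 0 := by
  rw [koszulCycle, map_sum]
  refine sum_congr rfl fun a _ => ?_
  rw [map_zsmul, map_mul, specializePM_yBig, compl_erase, compl_compl]
  split_ifs
  · simp only [specializePM, aeval_X, Sum.elim_inl]
    rw [mul_smul_comm, smul_smul]
  · rw [mul_zero, smul_zero]

lemma specializePM_facetSign_koszulCycle_compl {t : Finset (Fin d)} {i j : Fin d} (hi : i ∉ t)
    (hj : j ∉ t) (hij : i ≠ j) (hσ : insert i t ∈ Δ.facets) (hτ : insert j t ∈ Δ.facets) :
    specializePM k Δ (facetSign Δ) (koszulCycle k tᶜ) =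
      (simpSgn tᶜ i * facetSign Δ ⟨insert i t, hσ⟩) •
        (X (Sum.inl i) * X (Sum.inr ⟨insert i t, hσ⟩) -
          X (Sum.inl j) * X (Sum.inr ⟨insert j t, hτ⟩)) := by
  have hsub : {i, j} ⊆ tᶜ := by simp [insert_subset_iff, hi, hj]
  have hcoeff : simpSgn tᶜ j * facetSign Δ ⟨insert j t, hτ⟩ =
      -(simpSgn tᶜ i * facetSign Δ ⟨insert i t, hσ⟩) := by
    rw [simpSgn_compl_mul_facetSign_insert Δ hi, simpSgn_compl_mul_facetSign_insert Δ hj]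
    linear_combination (-1) ^ (∑ v ∈ t, (v : ℕ)) * Δ.sgn_mul_simpSgn_add_eq_zero hi hj hij hσ hτ
  rw [specializePM_koszulCycle_compl, ← sum_subset hsub, sum_pair hij, dif_pos hσ, dif_pos hτ,
    hcoeff, neg_smul, smul_sub, sub_eq_add_neg]
  intro a _ ha
  refine dif_neg fun h => ha ?_
  have := Δ.filter_superset_eq_pair hi hij hσ hτ ▸ mem_filter.2 ⟨h, subset_insert a t⟩
  simpa [insert_inj (mem_compl.1 ‹a ∈ tᶜ›)] using this

lemma specializePM_facetSign_koszulCycle_mem_JofPM (I : Finset (Fin d)) :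
    specializePM k Δ (facetSign Δ) (koszulCycle k I) ∈ JofPM k Δ := by
  obtain ⟨t, rfl⟩ : ∃ t, I = tᶜ := ⟨Iᶜ, (compl_compl I).symm⟩
  by_cases h : ∃ i ∉ t, insert i t ∈ Δ.facets
  · obtain ⟨i, hi, hσ⟩ := h
    obtain ⟨j, hj, hji, hτ⟩ := Δ.exists_insert_mem_facets_ne hi hσ
    rw [specializePM_facetSign_koszulCycle_compl k hi hj hji.symm hσ hτ]
    refine Submodule.smul_of_tower_mem _ _ (Ideal.subset_span ⟨_, _, i, j, mem_insert_self i t,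
      mem_insert_self j t, ?_, rfl⟩)
    rw [erase_insert hi, erase_insert hj]
  · push Not at h
    rw [specializePM_koszulCycle_compl,
      sum_eq_zero fun a ha => dif_neg (h a (mem_compl.1 ha))]
    exact zero_mem _

lemma binomial_mem_map_specializePM_facetSign {σ τ : {x // x ∈ Δ.facets}} {i j : Fin d}
    (hi : i ∈ (σ : Finset (Fin d))) (hj : j ∈ (τ : Finset (Fin d)))
    (hστ : (σ : Finset (Fin d)).erase i = (τ : Finset (Fin d)).erase j) :
    X (Sum.inl i) * X (Sum.inr σ) - X (Sum.inl j) * X (Sum.inr τ) ∈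
      Ideal.map (specializePM k Δ (facetSign Δ)) (JBigIdeal (n := n) (d := d) k) := by
  obtain ⟨σ, hσ⟩ := σ
  obtain ⟨τ, hτ⟩ := τ
  dsimp only at hi hj hστ
  obtain ⟨t, hit, rfl⟩ : ∃ t, i ∉ t ∧ σ = insert i t :=
    ⟨σ.erase i, notMem_erase i σ, (insert_erase hi).symm⟩
  rw [erase_insert hit] at hστ
  have hjt : j ∉ t := hστ ▸ notMem_erase j τ
  obtain rfl : τ = insert j t := by rw [hστ, insert_erase hj]
  obtain rfl | hij := eq_or_ne i j
  · rw [sub_self]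
    exact zero_mem _
  have hz : koszulCycle k tᶜ ∈ JBigIdeal (n := n) k := Ideal.subset_span
    ⟨tᶜ, by rw [card_compl, Fintype.card_fin, Δ.card_eq_of_insert_mem_facets hit hσ], rfl⟩
  have himage := Ideal.mem_map_of_mem (specializePM k Δ (facetSign Δ)) hz
  rw [specializePM_facetSign_koszulCycle_compl k hit hjt hij hσ hτ] at himage
  exact (Ideal.zsmul_mem_iff_of_isUnit _
    ((isUnit_simpSgn _ _).mul (Int.isUnit_iff.2 (facetSign_eq_one_or_neg_one Δ _)))).1 himage

theorem specialization_of_JBig_eq_binomial_ideal :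
    ∃ ε : {x // x ∈ Δ.facets} → ℤ, (∀ σ, ε σ = 1 ∨ ε σ = -1) ∧
      Ideal.map (specializePM k Δ ε) (JBigIdeal (n := n) (d := d) k) = JofPM k Δ := by
  refine ⟨facetSign Δ, facetSign_eq_one_or_neg_one Δ, le_antisymm ?_ ?_⟩
  · rw [JBigIdeal, Ideal.map_span, Ideal.span_le]
    rintro _ ⟨_, ⟨I, -, rfl⟩, rfl⟩
    exact specializePM_facetSign_koszulCycle_mem_JofPM k I
  · rw [JofPM, Ideal.span_le]
    rintro _ ⟨σ, τ, i, j, hi, hj, hστ, rfl⟩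
    exact binomial_mem_map_specializePM_facetSign k hi hj hστ

end
end

section
/- Let Δ be an oriented n-dimensional pseudomanifold on d vertices and 𝒜 ⊆ ℤ^{d+1} its associated point configuration. Then the geometric realization of the simplicial complex Δ_{e_0}(𝒜) is homotopy equivalent to the geometric realization of Δ. -/
open Finset

open MvPolynomial

/-!
Every face of `Δ_{e₀}(𝒜)` lies in a cone `{y_σ} ∪ {x_i : i ∈ σ}` over a facet `σ`, and these
cones are faces. Indeed, write `e₀` as a sum of elements of `𝒜` and evaluate it against the
`e₀`-coordinate and against `e_j + e₀`: both functionals are nonnegative on `𝒜` and equal to `1`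
at `e₀`, the first is positive exactly at the apices `y_σ`, and the second exactly at `x_j` and at
the `y_σ` with `j ∉ σ`. So the sum uses a single apex `y_σ` and otherwise only `x_i` with `i ∈ σ`.

Hence `|Δ|` sits inside `|Δ_{e₀}(𝒜)|`, spreading the mass of each apex `y_σ` evenly over `σ` is
a retraction onto it, and the straight-line homotopy from the composite to the identity stays in
one cone at every point.
-/

section Realization

variable {V : Type*} [Fintype V] {K : Set (Finset V)}

theorem lineMap_mem_realization {f g : V → ℝ} (hf : f ∈ realization V K)
    (hg : g ∈ realization V K) {s : Finset V} (hs : s ∈ K) (hfs : Function.support f ⊆ s)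
    (hgs : Function.support g ⊆ s) {t : ℝ} (ht₀ : 0 ≤ t) (ht₁ : t ≤ 1) :
    AffineMap.lineMap f g t ∈ realization V K := by
  obtain ⟨hf₀, hf₁, -⟩ := hf
  obtain ⟨hg₀, hg₁, -⟩ := hg
  rw [AffineMap.lineMap_apply_module]
  refine ⟨fun v => ?_, ?_, s, hs, fun v hv => ?_⟩
  · simp only [Pi.add_apply, Pi.smul_apply, smul_eq_mul]
    nlinarith [hf₀ v, hg₀ v]
  · simp only [Pi.add_apply, Pi.smul_apply, smul_eq_mul, sum_add_distrib, ← mul_sum, hf₁, hg₁]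
    ring
  · rcases Function.support_add _ _ hv with h | h
    · exact hfs (Function.support_smul_subset_right _ _ h)
    · exact hgs (Function.support_smul_subset_right _ _ h)

theorem homotopic_of_support_subset_face {X : Type*} [TopologicalSpace X]
    (f g : C(X, realization V K))
    (h : ∀ x, ∃ s ∈ K, Function.support (f x : V → ℝ) ⊆ s ∧
      Function.support (g x : V → ℝ) ⊆ s) :
    f.Homotopic g := by
  let ι : C(realization V K, V → ℝ) := ⟨Subtype.val, continuous_subtype_val⟩
  let H := ContinuousMap.Homotopy.affine (ι.comp f) (ι.comp g)
  have hH : ∀ q, H q ∈ realization V K := fun q => by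
    obtain ⟨s, hs, hfs, hgs⟩ := h q.2
    exact lineMap_mem_realization (f q.2).2 (g q.2).2 hs hfs hgs q.1.2.1 q.1.2.2
  exact ⟨{ toFun := fun q => ⟨H q, hH q⟩
           continuous_toFun := H.continuous.subtype_mk _
           map_zero_left := fun x => Subtype.ext (H.apply_zero x)
           map_one_left := fun x => Subtype.ext (H.apply_one x) }⟩

end Realization

theorem eq_of_sum_nsmul_le_one {ι M : Type*} [Fintype ι] [AddCommMonoid M] (F : M →+ ℤ)
    (w : ι → M) (c : ι → ℕ) (hF : ∀ i, 0 ≤ F (w i)) (hsum : F (∑ i, c i • w i) ≤ 1)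
    {i j : ι} (hci : c i ≠ 0) (hcj : c j ≠ 0) (hFi : 0 < F (w i)) (hFj : 0 < F (w j)) :
    i = j := by
  classical
  by_contra hij
  have hpair : (c i : ℤ) * F (w i) + c j * F (w j) ≤ ∑ k, (c k : ℤ) * F (w k) := by
    rw [← sum_pair (f := fun k => (c k : ℤ) * F (w k)) hij]
    exact sum_le_sum_of_subset_of_nonneg (subset_univ _) fun k _ _ =>
      mul_nonneg (Nat.cast_nonneg _) (hF k)
  simp only [map_sum, map_nsmul, nsmul_eq_mul] at hsum
  have : 1 ≤ (c i : ℤ) := by omega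
  have : 1 ≤ (c j : ℤ) := by omega
  nlinarith

namespace OrientedPseudomanifold

variable {n d : ℕ} {Δ : OrientedPseudomanifold n d}

@[simp] theorem wtv_inl_zero (i : Fin d) : wtv Δ (Sum.inl i) 0 = 0 := by
  simp [wtv, Fin.succ_ne_zero]

@[simp] theorem wtv_inr_zero (σ : {x // x ∈ Δ.facets}) : wtv Δ (Sum.inr σ) 0 = 1 := by
  simp [wtv, Fin.succ_ne_zero]

@[simp] theorem wtv_inl_succ (i j : Fin d) :
    wtv Δ (Sum.inl i) j.succ = if i = j then 1 else 0 := by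
  simp [wtv, Finsupp.single_apply, Fin.succ_inj]

@[simp] theorem wtv_inr_succ (σ : {x // x ∈ Δ.facets}) (j : Fin d) :
    wtv Δ (Sum.inr σ) j.succ = if j ∈ σ.1 then -1 else 0 := by
  simp [wtv, Finsupp.single_apply, Fin.succ_inj, Fin.succ_ne_zero, apply_ite]

variable (Δ) in
def facetCone (σ : {x // x ∈ Δ.facets}) : Finset (PMVars Δ) :=
  insert (Sum.inr σ) (σ.1.image Sum.inl)

@[simp] theorem inl_mem_facetCone {σ : {x // x ∈ Δ.facets}} {i : Fin d} :
    Sum.inl i ∈ Δ.facetCone σ ↔ i ∈ σ.1 := by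
  simp [facetCone]

@[simp] theorem inr_mem_facetCone {σ τ : {x // x ∈ Δ.facets}} :
    Sum.inr τ ∈ Δ.facetCone σ ↔ τ = σ := by
  simp [facetCone]

theorem facetCone_mem_facesDeltaE0 (σ : {x // x ∈ Δ.facets}) :
    Δ.facetCone σ ∈ facesDeltaE0 Δ := by
  have hsum : ∑ v ∈ Δ.facetCone σ, wtv Δ v = e0 d := by
    rw [facetCone, sum_insert (by simp), sum_image (fun _ _ _ _ h => Sum.inl_injective h)]
    simp [wtv, e0]
  simp only [facesDeltaE0, Set.mem_ofPred_eq, hsum, sub_self, zero_mem]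

theorem exists_facetCone_of_sum_nsmul_eq_e0 {c : PMVars Δ → ℕ}
    (hc : ∑ v, c v • wtv Δ v = e0 d) : ∃ σ, ∀ v, c v ≠ 0 → v ∈ Δ.facetCone σ := by
  let φ : (Fin (d + 1) →₀ ℤ) →+ ℤ := Finsupp.applyAddHom 0
  let ψ (j : Fin d) : (Fin (d + 1) →₀ ℤ) →+ ℤ := Finsupp.applyAddHom j.succ + φ
  have hφ : ∀ v, 0 ≤ φ (wtv Δ v) := by rintro (i | σ) <;> simp [φ]
  have hψ : ∀ j v, 0 ≤ ψ j (wtv Δ v) := by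
    rintro j (i | σ) <;> simp only [ψ, φ] <;> simp <;> split_ifs <;> norm_num
  have hφe0 : φ (∑ v, c v • wtv Δ v) ≤ 1 := by simp [hc, φ, e0]
  have hψe0 : ∀ j, ψ j (∑ v, c v • wtv Δ v) ≤ 1 := fun j => by simp [hc, ψ, φ, e0]
  obtain ⟨σ, hσ⟩ : ∃ σ, c (Sum.inr σ) ≠ 0 := by
    have : ∑ v, c v • φ (wtv Δ v) ≠ 0 := by
      simp_rw [← map_nsmul, ← map_sum, hc]
      simp [φ, e0]
    obtain ⟨v, -, hv⟩ := exists_ne_zero_of_sum_ne_zero this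
    rcases v with i | σ
    · simp [φ] at hv
    · exact ⟨σ, left_ne_zero_of_smul hv⟩
  refine ⟨σ, fun v hv => ?_⟩
  rcases v with i | τ
  · rw [inl_mem_facetCone]
    by_contra hi
    exact Sum.inl_ne_inr <| eq_of_sum_nsmul_le_one (ψ i) _ c (hψ i) (hψe0 i) hv hσ
      (by simp [ψ, φ]) (by simp [ψ, φ, hi])
  · exact inr_mem_facetCone.2 <| Sum.inr_injective <|
      eq_of_sum_nsmul_le_one φ _ c hφ hφe0 hv hσ (by simp [φ]) (by simp [φ])

theorem exists_subset_facetCone {s : Finset (PMVars Δ)} (hs : s ∈ facesDeltaE0 Δ) :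
    ∃ σ, s ⊆ Δ.facetCone σ := by
  classical
  obtain ⟨a, ha⟩ := AddSubmonoid.mem_closure_range_iff_of_fintype.mp hs
  have hsum : ∑ v, (a v + if v ∈ s then 1 else 0) • wtv Δ v = e0 d := by
    simp only [add_smul, sum_add_distrib, ite_smul, one_smul, zero_smul, sum_ite_mem,
      univ_inter, ← ha, sub_add_cancel]
  obtain ⟨σ, hσ⟩ := exists_facetCone_of_sum_nsmul_eq_e0 hsum
  exact ⟨σ, fun v hv => hσ v (by simp [hv])⟩

theorem exists_support_subset_facetCone {p : PMVars Δ → ℝ}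
    (hp : p ∈ realization (PMVars Δ) (facesDeltaE0 Δ)) :
    ∃ σ, Function.support p ⊆ Δ.facetCone σ := by
  obtain ⟨-, -, s, hs, hps⟩ := hp
  obtain ⟨σ, hσ⟩ := exists_subset_facetCone hs
  exact ⟨σ, fun v hv => hσ (hps v hv)⟩

variable (Δ) in
def extendByZero (x : Fin d → ℝ) : PMVars Δ → ℝ := Sum.elim x 0

variable (Δ) in
noncomputable def spreadApexMass (p : PMVars Δ → ℝ) : Fin d → ℝ :=
  fun i => p (Sum.inl i) + ∑ σ with i ∈ σ.1, p (Sum.inr σ) / (n + 1)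

theorem continuous_extendByZero : Continuous Δ.extendByZero :=
  continuous_pi fun v => by rcases v with i | σ; exacts [continuous_apply i, continuous_const]

theorem continuous_spreadApexMass : Continuous Δ.spreadApexMass := by
  unfold spreadApexMass
  fun_prop

theorem spreadApexMass_extendByZero (x : Fin d → ℝ) :
    Δ.spreadApexMass (Δ.extendByZero x) = x := by
  ext i
  simp [spreadApexMass, extendByZero]

theorem sum_spreadApexMass (p : PMVars Δ → ℝ) : ∑ i, Δ.spreadApexMass p i = ∑ v, p v := by
  simp only [spreadApexMass, sum_add_distrib, Fintype.sum_sum_type, add_right_inj]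
  rw [sum_comm' (t' := univ) (s' := fun σ => σ.1) (by simp)]
  refine sum_congr rfl fun σ _ => ?_
  rw [sum_const, Δ.card_eq σ.1 σ.2, nsmul_eq_mul]
  field_simp
  push_cast
  ring

theorem support_extendByZero_subset {x : Fin d → ℝ} {σ : {x // x ∈ Δ.facets}}
    (hx : Function.support x ⊆ σ.1) : Function.support (Δ.extendByZero x) ⊆ Δ.facetCone σ := by
  rintro (i | τ) hv
  · exact inl_mem_facetCone.2 (hx hv)
  · exact absurd rfl hv

theorem support_spreadApexMass_subset {p : PMVars Δ → ℝ} {σ : {x // x ∈ Δ.facets}}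
    (hp : Function.support p ⊆ Δ.facetCone σ) :
    Function.support (Δ.spreadApexMass p) ⊆ σ.1 := by
  intro i hi
  by_contra hiσ
  have hx : p (Sum.inl i) = 0 :=
    Function.notMem_support.1 fun h => hiσ (inl_mem_facetCone.1 (hp h))
  have hy : ∀ τ : {x // x ∈ Δ.facets}, i ∈ τ.1 → p (Sum.inr τ) = 0 := fun τ hτ =>
    Function.notMem_support.1 fun h => hiσ (inr_mem_facetCone.1 (hp h) ▸ hτ)
  apply hi
  simp only [spreadApexMass, hx, zero_add]
  exact sum_eq_zero fun τ hτ => by rw [hy τ (mem_filter.1 hτ).2, zero_div]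

theorem extendByZero_mem_realization {x : Fin d → ℝ}
    (hx : x ∈ realization (Fin d) (facesPM Δ)) :
    Δ.extendByZero x ∈ realization (PMVars Δ) (facesDeltaE0 Δ) := by
  obtain ⟨hx₀, hx₁, t, ⟨σ, hσ, htσ⟩, hxt⟩ := hx
  refine ⟨?_, ?_, Δ.facetCone ⟨σ, hσ⟩, facetCone_mem_facesDeltaE0 _,
    support_extendByZero_subset fun i hi => htσ (hxt i hi)⟩
  · rintro (i | τ)
    exacts [hx₀ i, le_rfl]
  · simpa [extendByZero, Fintype.sum_sum_type] using hx₁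

theorem spreadApexMass_mem_realization {p : PMVars Δ → ℝ}
    (hp : p ∈ realization (PMVars Δ) (facesDeltaE0 Δ)) :
    Δ.spreadApexMass p ∈ realization (Fin d) (facesPM Δ) := by
  obtain ⟨σ, hσ⟩ := exists_support_subset_facetCone hp
  obtain ⟨hp₀, hp₁, -⟩ := hp
  refine ⟨fun i => ?_, (sum_spreadApexMass p).trans hp₁, σ.1, ⟨σ.1, σ.2, subset_rfl⟩,
    support_spreadApexMass_subset hσ⟩
  exact add_nonneg (hp₀ _) (sum_nonneg fun τ _ => div_nonneg (hp₀ _) (by positivity))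

variable (Δ)

def inclusionRealization :
    C(realization (Fin d) (facesPM Δ), realization (PMVars Δ) (facesDeltaE0 Δ)) where
  toFun x := ⟨Δ.extendByZero x, extendByZero_mem_realization x.2⟩
  continuous_toFun := (continuous_extendByZero.comp continuous_subtype_val).subtype_mk _

noncomputable def retractionRealization :
    C(realization (PMVars Δ) (facesDeltaE0 Δ), realization (Fin d) (facesPM Δ)) where
  toFun p := ⟨Δ.spreadApexMass p, spreadApexMass_mem_realization p.2⟩
  continuous_toFun := (continuous_spreadApexMass.comp continuous_subtype_val).subtype_mk _

theorem retractionRealization_comp_inclusionRealization :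
    Δ.retractionRealization.comp Δ.inclusionRealization = ContinuousMap.id _ := by
  ext x : 1
  exact Subtype.ext (spreadApexMass_extendByZero x.1)

end OrientedPseudomanifold

theorem deltaE0_homotopy_equivalent_to_pseudomanifold {n d : ℕ}
    (Δ : OrientedPseudomanifold n d) :
    Nonempty (ContinuousMap.HomotopyEquiv
      (realization (Fin d) (facesPM Δ))
      (realization (PMVars Δ) (facesDeltaE0 Δ))) := by
  refine ⟨⟨Δ.inclusionRealization, Δ.retractionRealization, ?_, ?_⟩⟩
  · rw [Δ.retractionRealization_comp_inclusionRealization]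
  · refine homotopic_of_support_subset_face _ _ fun p => ?_
    obtain ⟨σ, hσ⟩ := OrientedPseudomanifold.exists_support_subset_facetCone p.2
    exact ⟨Δ.facetCone σ, OrientedPseudomanifold.facetCone_mem_facesDeltaE0 σ,
      OrientedPseudomanifold.support_extendByZero_subset
        (OrientedPseudomanifold.support_spreadApexMass_subset hσ), hσ⟩
end

section
/- Let Δ be an oriented n-dimensional pseudomanifold on d vertices and 𝒜 ⊆ ℤ^{d+1} its associated point configuration. Then the faces of Δ_{e_0}(𝒜) are exactly the following sets: (i) {e_i : i ∈ τ} for τ a face of Δ (i.e., τ a subset of some facet of Δ), and (ii) {wt(σ)} ∪ {e_i : i ∈ τ} for σ ∈ Δ_n and τ ⊆ σ. In particular, no face of Δ_{e_0}(𝒜) contains two elements of the form wt(σ). -/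
open Finset

open MvPolynomial

/-!
STATEMENT 10: the faces of `Δ_{e₀}(𝒜)` are exactly the sets `{e_i : i ∈ τ}` for `τ` a
face of `Δ`, and `{wt(σ)} ∪ {e_i : i ∈ τ}` for `σ` a facet of `Δ` and `τ ⊆ σ`;
equivalently, the faces are exactly the subsets of the sets
`{wt(σ)} ∪ {e_i : i ∈ σ}`, `σ` a facet.  In particular no face contains two elements
of the form `wt(σ)`.
-/

-- AUX START
section Aux

variable {n d : ℕ} {Δ : OrientedPseudomanifold n d}

lemma wtv_inl_apply_zero (i : Fin d) : wtv Δ (Sum.inl i) 0 = 0 := by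
  simp [wtv, Finsupp.single_apply, Fin.succ_ne_zero i]

lemma wtv_inr_apply_zero (σ : {x // x ∈ Δ.facets}) : wtv Δ (Sum.inr σ) 0 = 1 := by
  simp [wtv, Finsupp.single_apply, Finsupp.sub_apply, Finsupp.finset_sum_apply,
    Fin.succ_ne_zero]

lemma wtv_inl_apply_succ (i j : Fin d) :
    wtv Δ (Sum.inl i) j.succ = if i = j then 1 else 0 := by
  simp [wtv, Finsupp.single_apply, Fin.succ_inj]

lemma wtv_inr_apply_succ (σ : {x // x ∈ Δ.facets}) (j : Fin d) :
    wtv Δ (Sum.inr σ) j.succ = if j ∈ (σ : Finset (Fin d)) then -1 else 0 := by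
  simp only [wtv, Sum.elim_inr, Finsupp.sub_apply, Finsupp.finset_sum_apply,
    Finsupp.single_apply, Fin.succ_inj]
  rw [Finset.sum_ite_eq' (σ : Finset (Fin d)) j (fun _ => (1:ℤ))]
  simp [Fin.succ_ne_zero j, (Fin.succ_ne_zero j).symm]
  split <;> simp

lemma wtv_inl_apply_nonneg (i : Fin d) (c : Fin (d+1)) : 0 ≤ wtv Δ (Sum.inl i) c := by
  simp only [wtv, Sum.elim_inl, Finsupp.single_apply]
  split <;> norm_num

lemma wtv_apply_zero_nonneg (v : PMVars Δ) : 0 ≤ wtv Δ v 0 := by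
  cases v with
  | inl i => rw [wtv_inl_apply_zero]
  | inr σ => rw [wtv_inr_apply_zero]; norm_num

lemma multiset_sum_apply (l : Multiset (Fin (d+1) →₀ ℤ)) (c : Fin (d+1)) :
    l.sum c = (l.map (fun x => x c)).sum := by
  induction l using Multiset.induction with
  | empty => simp
  | cons x l ih => simp [Finsupp.add_apply, ih]

lemma sum_apply_zero_nonneg (l : Multiset (Fin (d+1) →₀ ℤ))
    (hl : ∀ x ∈ l, x ∈ Set.range (wtv Δ)) : 0 ≤ l.sum 0 := by
  rw [multiset_sum_apply]
  apply Multiset.sum_nonneg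
  intro a ha
  obtain ⟨x, hx, rfl⟩ := Multiset.mem_map.mp ha
  obtain ⟨v, rfl⟩ := hl x hx
  exact wtv_apply_zero_nonneg v

lemma all_etype_of_sum_zero (l : Multiset (Fin (d+1) →₀ ℤ))
    (hl : ∀ x ∈ l, x ∈ Set.range (wtv Δ)) (h0 : l.sum 0 = 0) :
    ∀ x ∈ l, ∃ i, x = wtv Δ (Sum.inl i) := by
  intro x hx
  obtain ⟨v, rfl⟩ := hl x hx
  cases v with
  | inl i => exact ⟨i, rfl⟩
  | inr σ =>
    exfalso
    have hrest : 0 ≤ (l.erase (wtv Δ (Sum.inr σ))).sum 0 :=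
      sum_apply_zero_nonneg _ (fun y hy => hl y (Multiset.mem_of_mem_erase hy))
    have : l.sum = wtv Δ (Sum.inr σ) + (l.erase (wtv Δ (Sum.inr σ))).sum := by
      conv_lhs => rw [← Multiset.cons_erase hx]
      rw [Multiset.sum_cons]
    rw [this, Finsupp.add_apply, wtv_inr_apply_zero] at h0
    omega

lemma sum_apply_nonneg_of_all_etype (l : Multiset (Fin (d+1) →₀ ℤ))
    (hl : ∀ x ∈ l, ∃ i, x = wtv Δ (Sum.inl i)) (c : Fin (d+1)) : 0 ≤ l.sum c := by
  rw [multiset_sum_apply]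
  apply Multiset.sum_nonneg
  intro a ha
  obtain ⟨x, hx, rfl⟩ := Multiset.mem_map.mp ha
  obtain ⟨i, rfl⟩ := hl x hx
  exact wtv_inl_apply_nonneg i c

lemma exists_inr_of_sum_zero_eq_one (l : Multiset (Fin (d+1) →₀ ℤ))
    (hl : ∀ x ∈ l, x ∈ Set.range (wtv Δ)) (h1 : l.sum 0 = 1) :
    ∃ σ, wtv Δ (Sum.inr σ) ∈ l := by
  by_contra h
  push_neg at h
  have : l.sum 0 = 0 := by
    rw [multiset_sum_apply]
    apply Multiset.sum_eq_zero
    intro a ha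
    obtain ⟨x, hx, rfl⟩ := Multiset.mem_map.mp ha
    obtain ⟨v, rfl⟩ := hl x hx
    cases v with
    | inl i => exact wtv_inl_apply_zero i
    | inr σ => exact absurd hx (h σ)
  omega

end Aux

section Main

variable {n d : ℕ} {Δ : OrientedPseudomanifold n d}

lemma no_two_inr {I : Finset (PMVars Δ)} (hI : I ∈ facesDeltaE0 Δ) :
    ∀ σ τ : {x // x ∈ Δ.facets}, Sum.inr σ ∈ I → Sum.inr τ ∈ I → σ = τ := by
  intro σ τ hσ hτ
  by_contra hne
  obtain ⟨l, hl, hsum⟩ := AddSubmonoid.exists_multiset_of_mem_closure hI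
  have hm0 : 0 ≤ l.sum 0 := sum_apply_zero_nonneg l hl
  rw [hsum] at hm0
  have h1 : (e0 d) 0 = 1 := by simp [e0]
  have h2 : (2:ℤ) ≤ ∑ v ∈ I, wtv Δ v 0 := by
    have hsub : ({Sum.inr σ, Sum.inr τ} : Finset (PMVars Δ)) ⊆ I := by
      intro v hv
      rcases Finset.mem_insert.mp hv with rfl | hv
      · exact hσ
      · rw [Finset.mem_singleton.mp hv]; exact hτ
    calc (2:ℤ) = ∑ v ∈ ({Sum.inr σ, Sum.inr τ} : Finset (PMVars Δ)), wtv Δ v 0 := by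
          rw [Finset.sum_pair (by simpa using hne), wtv_inr_apply_zero, wtv_inr_apply_zero]
          norm_num
      _ ≤ _ := Finset.sum_le_sum_of_subset_of_nonneg hsub
            (fun v _ _ => wtv_apply_zero_nonneg v)
  rw [Finsupp.sub_apply, h1, Finsupp.finset_sum_apply] at hm0
  omega

lemma face_subset {I : Finset (PMVars Δ)} (hI : I ∈ facesDeltaE0 Δ) :
    ∃ (σ : Finset (Fin d)) (h : σ ∈ Δ.facets),
      I ⊆ insert (Sum.inr ⟨σ, h⟩) (σ.image Sum.inl) := by
  obtain ⟨l, hl, hsum⟩ := AddSubmonoid.exists_multiset_of_mem_closure hI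
  by_cases hex : ∃ σ : {x // x ∈ Δ.facets}, Sum.inr σ ∈ I
  · obtain ⟨σ, hσ⟩ := hex
    have hS0 : ∑ v ∈ I, wtv Δ v 0 = 1 := by
      rw [Finset.sum_eq_single_of_mem (Sum.inr σ)
        (f := fun v => wtv Δ v 0) hσ ?_, wtv_inr_apply_zero]
      intro v hv hne
      cases v with
      | inl i => exact wtv_inl_apply_zero i
      | inr τ => exact absurd (congrArg Sum.inr (no_two_inr hI τ σ hv hσ)) hne
    have hl0 : l.sum 0 = 0 := by
      rw [hsum, Finsupp.sub_apply, Finsupp.finset_sum_apply, hS0]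
      simp [e0]
    have hall := all_etype_of_sum_zero l hl hl0
    have hpos : ∀ c, 0 ≤ (e0 d - ∑ v ∈ I, wtv Δ v) c := by
      intro c; rw [← hsum]; exact sum_apply_nonneg_of_all_etype l hall c
    refine ⟨σ.1, σ.2, ?_⟩
    intro v hv
    cases v with
    | inr τ =>
      have hts : τ = σ := no_two_inr hI τ σ hv hσ
      subst hts
      exact Finset.mem_insert_self _ _
    | inl i =>
      apply Finset.mem_insert_of_mem
      refine Finset.mem_image.mpr ⟨i, ?_, rfl⟩
      by_contra hiσ
      have hp := hpos i.succ
      rw [Finsupp.sub_apply, Finsupp.finset_sum_apply] at hp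
      have he : (e0 d) i.succ = 0 := by
        simp [e0, Finsupp.single_apply, (Fin.succ_ne_zero i).symm]
      have hpair : ({Sum.inl i, Sum.inr σ} : Finset (PMVars Δ)) ⊆ I := by
        intro v hv'
        rcases Finset.mem_insert.mp hv' with rfl | hv'
        · exact hv
        · rw [Finset.mem_singleton.mp hv']; exact hσ
      have hge : (1:ℤ) ≤ ∑ v ∈ I, wtv Δ v i.succ := by
        calc (1:ℤ) = ∑ v ∈ ({Sum.inl i, Sum.inr σ} : Finset (PMVars Δ)), wtv Δ v i.succ := by
              rw [Finset.sum_pair (by simp), wtv_inl_apply_succ, wtv_inr_apply_succ,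
                if_pos rfl, if_neg hiσ]
              ring
          _ ≤ _ := by
              refine Finset.sum_le_sum_of_subset_of_nonneg hpair ?_
              intro v hvI hvp
              cases v with
              | inl j => exact wtv_inl_apply_nonneg j i.succ
              | inr τ =>
                exfalso
                have : τ = σ := no_two_inr hI τ σ hvI hσ
                subst this
                exact hvp (by simp)
      linarith
  · push_neg at hex
    have hIinl : ∀ v ∈ I, ∃ i, v = Sum.inl i := by
      intro v hv
      cases v with
      | inl i => exact ⟨i, rfl⟩
      | inr σ => exact absurd hv (hex σ)
    have hS0 : ∑ v ∈ I, wtv Δ v 0 = 0 :=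
      Finset.sum_eq_zero (fun v hv => by
        obtain ⟨i, rfl⟩ := hIinl v hv; exact wtv_inl_apply_zero i)
    have hl1 : l.sum 0 = 1 := by
      rw [hsum, Finsupp.sub_apply, Finsupp.finset_sum_apply, hS0]
      simp [e0]
    obtain ⟨σ, hσl⟩ := exists_inr_of_sum_zero_eq_one l hl hl1
    set l' := l.erase (wtv Δ (Sum.inr σ)) with hl'def
    have hlsplit : l.sum = wtv Δ (Sum.inr σ) + l'.sum := by
      conv_lhs => rw [← Multiset.cons_erase hσl]
      rw [Multiset.sum_cons]
    have hl'range : ∀ x ∈ l', x ∈ Set.range (wtv Δ) :=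
      fun x hx => hl x (Multiset.mem_of_mem_erase hx)
    have hl'0 : l'.sum 0 = 0 := by
      have h := DFunLike.congr_fun hlsplit 0
      rw [hl1, Finsupp.add_apply, wtv_inr_apply_zero] at h
      omega
    have hall := all_etype_of_sum_zero l' hl'range hl'0
    have hpos : ∀ c, 0 ≤ l'.sum c := sum_apply_nonneg_of_all_etype l' hall
    refine ⟨σ.1, σ.2, ?_⟩
    intro v hv
    obtain ⟨i, rfl⟩ := hIinl v hv
    apply Finset.mem_insert_of_mem
    refine Finset.mem_image.mpr ⟨i, ?_, rfl⟩
    by_contra hiσ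
    have hp := hpos i.succ
    have h1 : l.sum i.succ = (e0 d) i.succ - ∑ v ∈ I, wtv Δ v i.succ := by
      rw [hsum, Finsupp.sub_apply, Finsupp.finset_sum_apply]
    have h2 := DFunLike.congr_fun hlsplit i.succ
    rw [Finsupp.add_apply, wtv_inr_apply_succ, if_neg hiσ] at h2
    have he : (e0 d) i.succ = 0 := by
      simp [e0, Finsupp.single_apply, (Fin.succ_ne_zero i).symm]
    have hge : (1:ℤ) ≤ ∑ v ∈ I, wtv Δ v i.succ := by
      have := Finset.single_le_sum (f := fun v => wtv Δ v i.succ)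
        (fun v hv' => by
          obtain ⟨j, rfl⟩ := hIinl v hv'
          exact wtv_inl_apply_nonneg j i.succ) hv
      simpa [wtv_inl_apply_succ] using this
    linarith

lemma subset_face {I : Finset (PMVars Δ)} {σ : Finset (Fin d)} (h : σ ∈ Δ.facets)
    (hsub : I ⊆ insert (Sum.inr ⟨σ, h⟩) (σ.image Sum.inl)) : I ∈ facesDeltaE0 Δ := by
  set J : Finset (PMVars Δ) := insert (Sum.inr ⟨σ, h⟩) (σ.image Sum.inl) with hJ
  have hJsum : ∑ v ∈ J, wtv Δ v = e0 d := by
    rw [hJ, Finset.sum_insert (by simp)]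
    rw [Finset.sum_image (fun a _ b _ hab => Sum.inl.inj hab)]
    simp only [wtv, Sum.elim_inl, Sum.elim_inr, e0]
    abel
  have hsd := Finset.sum_sdiff (f := wtv Δ) hsub
  have key : e0 d - ∑ v ∈ I, wtv Δ v = ∑ v ∈ J \ I, wtv Δ v := by
    rw [sub_eq_iff_eq_add]
    rw [hJsum] at hsd
    exact hsd.symm
  show (e0 d - ∑ v ∈ I, wtv Δ v) ∈ AddSubmonoid.closure (Set.range (wtv Δ))
  rw [key]
  exact AddSubmonoid.sum_mem _ (fun v _ => AddSubmonoid.subset_closure ⟨v, rfl⟩)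

end Main

theorem faces_of_deltaE0 {n d : ℕ} (k : Type*) [Field k] (Δ : OrientedPseudomanifold n d) :
    (∀ I : Finset (PMVars Δ), I ∈ facesDeltaE0 Δ ↔
      ∃ (σ : Finset (Fin d)) (h : σ ∈ Δ.facets),
        I ⊆ insert (Sum.inr ⟨σ, h⟩) (σ.image Sum.inl)) ∧
    (∀ I : Finset (PMVars Δ), I ∈ facesDeltaE0 Δ →
      ∀ σ τ : {x // x ∈ Δ.facets}, Sum.inr σ ∈ I → Sum.inr τ ∈ I → σ = τ) := by
  constructor
  · intro I
    constructor
    · exact face_subset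
    · rintro ⟨σ, h, hsub⟩
      exact subset_face h hsub
  · intro I hI
    exact no_two_inr hI
end

section
/- Let Δ be an oriented n-dimensional pseudomanifold on d vertices. Then J_Δ = L_Δ = I_𝒜; in particular, J_Δ is a prime toric ideal, and the saturation of the binomial ideal J(Δ) at the product of the x-variables is the defining ideal of the Rees algebra of the Stanley–Reisner ideal of the Alexander dual of Δ. -/
open Finset

open MvPolynomial

/-- A (semigroup, toric) ideal: the kernel of a `k`-algebra homomorphism from the
polynomial ring to a Laurent polynomial ring sending each variable to a monomial. -/
def IsToricIdeal {k : Type*} [Field k] {σv : Type*} (I : Ideal (MvPolynomial σv k)) : Prop :=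
  ∃ (p : ℕ) (m : σv → (Fin p →₀ ℤ)),
    I = RingHom.ker (MvPolynomial.aeval
      (fun i => (AddMonoidAlgebra.single (m i) 1 : AddMonoidAlgebra k (Fin p →₀ ℤ)))).toRingHom

/-!
Both `L_Δ` and `I_𝒜` are kernels of monomial maps, hence spanned by the binomials
`x^f - x^g` whose exponents have the same image; the exponent of the image under the Rees map
and the weight in `ℤ^{d+1}` determine each other linearly, so the two maps have the same fibres
and `L_Δ = I_𝒜` is prime. Since `J(Δ) ⊆ L_Δ` and `x₁⋯x_d ∉ L_Δ`, also `J_Δ ⊆ L_Δ`. Conversely a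
binomial of `L_Δ` lies in `J_Δ` by induction on its degree in the `y`'s: connectivity of the
dual graph yields `x^a y_σ ≡ x^b y_τ` modulo `J(Δ)` for any two facets, and `x`-monomials are
invertible modulo the saturation, so one `y`-variable can be removed from each side.
-/

open AddMonoidAlgebra

namespace AddMonoidAlgebra

section Ring

variable {R M N : Type*} [Ring R]

def fiberBinomials (h : M → N) : Set (AddMonoidAlgebra R M) :=
  {p | ∃ a b, h a = h b ∧ p = single a 1 - single b 1}

theorem sub_mapDomain_mem_span_fiberBinomials {h : M → N} {g : M → M} (hg : ∀ a, h (g a) = h a)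
    (x : AddMonoidAlgebra R M) :
    x - mapDomain g x ∈ Submodule.span R (fiberBinomials h) := by
  induction x using AddMonoidAlgebra.induction_linear with
  | zero => simp
  | add x y hx hy =>
    rw [mapDomain_add, add_sub_add_comm]
    exact add_mem hx hy
  | single a r =>
    rw [mapDomain_single, show single a r - single (g a) r
      = r • (single a 1 - single (g a) (1 : R)) by simp [smul_sub, smul_single]]
    exact Submodule.smul_mem _ r (Submodule.subset_span ⟨a, g a, (hg a).symm, rfl⟩)

theorem mem_span_fiberBinomials_of_mapDomain_eq_zero [Nonempty M] {h : M → N}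
    {x : AddMonoidAlgebra R M} (hx : mapDomain h x = 0) :
    x ∈ Submodule.span R (fiberBinomials h) := by
  -- `x` is killed by `mapDomain` along `invFun h ∘ h`, which preserves the fibres of `h`.
  have hsection : mapDomain (Function.invFun h ∘ h) x = mapDomain (Function.invFun h) 0 := by
    rw [← hx]
    ext1
    simp [Finsupp.mapDomain_comp]
  have := sub_mapDomain_mem_span_fiberBinomials (R := R) (g := Function.invFun h ∘ h)
    (fun a => Function.invFun_eq ⟨a, rfl⟩) x
  rwa [hsection, mapDomain_zero, sub_zero] at this

end Ring

variable {R M N N' : Type*} [CommRing R] [AddCommMonoid M] [AddCommMonoid N] [AddCommMonoid N']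

theorem single_sub_single_mem_ker_mapDomainAlgHom_iff [Nontrivial R] (h : M →+ N) (a b : M) :
    single a 1 - single b 1 ∈ RingHom.ker (mapDomainAlgHom R R h).toRingHom ↔ h a = h b := by
  simp [map_sub, sub_eq_zero, single_left_inj one_ne_zero]

theorem ker_mapDomainAlgHom_le {h : M →+ N} {h' : M →+ N'} (hh : ∀ a b, h a = h b → h' a = h' b) :
    RingHom.ker (mapDomainAlgHom R R h).toRingHom ≤
      RingHom.ker (mapDomainAlgHom R R h').toRingHom := by
  intro x hx
  refine Submodule.span_le (p := (RingHom.ker _).restrictScalars R).mpr ?_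
    (mem_span_fiberBinomials_of_mapDomain_eq_zero (h := h) (by simpa using hx))
  rintro _ ⟨a, b, hab, rfl⟩
  simp [map_sub, hh a b hab]

end AddMonoidAlgebra

namespace MvPolynomial

variable {R σ M : Type*} [CommRing R] [AddCommMonoid M]

theorem aeval_single_eq_mapDomainAlgHom (e : σ → M) :
    aeval (fun v => AddMonoidAlgebra.single (e v) (1 : R)) =
      mapDomainAlgHom R R (Finsupp.linearCombination ℕ e).toAddMonoidHom := by
  refine algHom_ext fun v => ?_
  rw [aeval_X]
  simp [X, monomial]

theorem monomial_add_one (a b : σ →₀ ℕ) :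
    monomial (a + b) (1 : R) = monomial a 1 * monomial b 1 := by
  rw [monomial_mul, one_mul]

end MvPolynomial

namespace Ideal

variable {R : Type*} [CommRing R] {J : Ideal R} {x : R}

theorem mem_iSup_colon_span_pow_iff {q : R} :
    q ∈ ⨆ m : ℕ, Submodule.colon J (Ideal.span {x ^ m}) ↔ ∃ N, x ^ N * q ∈ J := by
  have hmono : Monotone fun m : ℕ => Submodule.colon J (Ideal.span {x ^ m}) := by
    intro m m' hm r hr
    rw [Ideal.mem_colon_span_singleton] at hr ⊢
    rw [← Nat.add_sub_cancel' hm, pow_add, ← mul_assoc]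
    exact J.mul_mem_right _ hr
  rw [Submodule.mem_iSup_of_directed _ hmono.directed_le]
  simp only [Ideal.mem_colon_span_singleton, mul_comm]

theorem le_iSup_colon_span_pow : J ≤ ⨆ m : ℕ, Submodule.colon J (Ideal.span {x ^ m}) :=
  fun _ hq => mem_iSup_colon_span_pow_iff.mpr ⟨0, by rwa [pow_zero, one_mul]⟩

theorem mem_iSup_colon_span_pow_of_pow_mul_mem {q : R} {N : ℕ}
    (hq : x ^ N * q ∈ ⨆ m : ℕ, Submodule.colon J (Ideal.span {x ^ m})) :
    q ∈ ⨆ m : ℕ, Submodule.colon J (Ideal.span {x ^ m}) := by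
  obtain ⟨M, hM⟩ := mem_iSup_colon_span_pow_iff.mp hq
  exact mem_iSup_colon_span_pow_iff.mpr ⟨M + N, by rwa [pow_add, mul_assoc]⟩

theorem iSup_colon_span_pow_le_of_isPrime {P : Ideal R} [P.IsPrime] (hJ : J ≤ P) (hx : x ∉ P) :
    ⨆ m : ℕ, Submodule.colon J (Ideal.span {x ^ m}) ≤ P := by
  intro q hq
  obtain ⟨N, hN⟩ := mem_iSup_colon_span_pow_iff.mp hq
  exact ((‹P.IsPrime›.mem_or_mem (hJ hN)).resolve_left
    fun h => hx (‹P.IsPrime›.mem_of_pow_mem N h))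

end Ideal

theorem Finset.exists_erase_eq_erase_of_card_eq {α : Type*} [DecidableEq α] {s t : Finset α}
    (hs : s.card = (s ∩ t).card + 1) (ht : t.card = (s ∩ t).card + 1) :
    ∃ i ∈ s, ∃ j ∈ t, s.erase i = t.erase j := by
  obtain ⟨i, hi⟩ := Finset.card_eq_one.mp (show (s \ t).card = 1 by
    have := Finset.card_inter_add_card_sdiff s t; omega)
  obtain ⟨j, hj⟩ := Finset.card_eq_one.mp (show (t \ s).card = 1 by
    have := Finset.card_inter_add_card_sdiff t s; rw [Finset.inter_comm] at this; omega)
  have hi' : i ∈ s \ t := hi ▸ Finset.mem_singleton_self i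
  have hj' : j ∈ t \ s := hj ▸ Finset.mem_singleton_self j
  refine ⟨i, (Finset.mem_sdiff.mp hi').1, j, (Finset.mem_sdiff.mp hj').1, ?_⟩
  rw [Finset.erase_eq, Finset.erase_eq, ← hi, ← hj, Finset.sdiff_sdiff_self_left,
    Finset.sdiff_sdiff_self_left, Finset.inter_comm]

noncomputable section

variable {n d : ℕ} (k : Type*) [Field k] (Δ : OrientedPseudomanifold n d)

/-- The exponent of the image of a variable under the Rees map (`none` stands for `t`). -/
def reesExp : PMVars Δ → (Option (Fin d) →₀ ℕ) :=
  Sum.elim (fun i => Finsupp.single (some i) 1)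
    (fun σ => Finsupp.single none 1 + ∑ i ∈ (σ : Finset (Fin d))ᶜ, Finsupp.single (some i) 1)

def reesDeg : (PMVars Δ →₀ ℕ) →+ (Option (Fin d) →₀ ℕ) :=
  (Finsupp.linearCombination ℕ (reesExp Δ)).toAddMonoidHom

def wtDeg : (PMVars Δ →₀ ℕ) →+ (Fin (d + 1) →₀ ℤ) :=
  (Finsupp.linearCombination ℕ (wtv Δ)).toAddMonoidHom

@[simp]
lemma reesDeg_single (v : PMVars Δ) (m : ℕ) :
    reesDeg Δ (Finsupp.single v m) = m • reesExp Δ v := by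
  simp [reesDeg]

@[simp]
lemma wtDeg_single (v : PMVars Δ) (m : ℕ) : wtDeg Δ (Finsupp.single v m) = m • wtv Δ v := by
  simp [wtDeg]

@[simp]
lemma reesExp_inl_none (i : Fin d) : reesExp Δ (Sum.inl i) none = 0 := by
  simp [reesExp]

@[simp]
lemma reesExp_inr_none (σ : {x // x ∈ Δ.facets}) : reesExp Δ (Sum.inr σ) none = 1 := by
  simp [reesExp]

lemma reesDeg_none (f : PMVars Δ →₀ ℕ) : reesDeg Δ f none = ∑ σ, f (Sum.inr σ) := by
  induction f using Finsupp.induction_linear with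
  | zero => simp
  | add f g hf hg => simp [hf, hg, Finset.sum_add_distrib]
  | single v m =>
    rcases v with i | σ
    · simp
    · simp [Finsupp.single_apply]

lemma reesDeg_some (f : PMVars Δ →₀ ℕ) (i : Fin d) :
    reesDeg Δ f (some i) = f (Sum.inl i) +
      ∑ σ ∈ univ.filter (fun σ : {x // x ∈ Δ.facets} => i ∉ (σ : Finset (Fin d))),
        f (Sum.inr σ) := by
  induction f using Finsupp.induction_linear with
  | zero => simp
  | add f g hf hg =>
    simp only [map_add, Finsupp.add_apply, hf, hg, Finset.sum_add_distrib]
    ring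
  | single v m =>
    rcases v with l | σ
    · simp [reesExp, Finsupp.single_apply]
    · simp [reesExp, Finsupp.single_apply]

lemma wtDeg_zero (f : PMVars Δ →₀ ℕ) : wtDeg Δ f 0 = reesDeg Δ f none := by
  induction f using Finsupp.induction_linear with
  | zero => simp
  | add f g hf hg => simp [hf, hg]
  | single v m =>
    rcases v with i | σ
    · simp [wtv]
    · simp [wtv]

lemma wtDeg_succ (f : PMVars Δ →₀ ℕ) (i : Fin d) :
    wtDeg Δ f i.succ = reesDeg Δ f (some i) - reesDeg Δ f none := by
  induction f using Finsupp.induction_linear with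
  | zero => simp
  | add f g hf hg =>
    simp only [map_add, Finsupp.add_apply, hf, hg, Nat.cast_add]
    ring
  | single v m =>
    rcases v with l | σ
    · simp [wtv, reesExp, Finsupp.single_apply]
    · by_cases hi : i ∈ (σ : Finset (Fin d)) <;> simp [wtv, reesExp, Finsupp.single_apply, hi]

lemma reesDeg_eq_iff_wtDeg_eq {f g : PMVars Δ →₀ ℕ} :
    reesDeg Δ f = reesDeg Δ g ↔ wtDeg Δ f = wtDeg Δ g := by
  constructor
  · intro h
    ext c
    cases c using Fin.cases <;> simp [wtDeg_zero, wtDeg_succ, h]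
  · intro h
    have h0 : reesDeg Δ f none = reesDeg Δ g none := by
      exact_mod_cast (wtDeg_zero Δ f).symm.trans ((congrArg (· 0) h).trans (wtDeg_zero Δ g))
    ext (_ | i)
    · exact h0
    · have := (wtDeg_succ Δ f i).symm.trans ((congrArg (· i.succ) h).trans (wtDeg_succ Δ g i))
      omega

lemma LofPM_eq_ker : LofPM k Δ = RingHom.ker (mapDomainAlgHom k k (reesDeg Δ)).toRingHom := by
  have hX : (Sum.elim (fun i => (X (some i) : MvPolynomial (Option (Fin d)) k))
      fun σ : {x // x ∈ Δ.facets} => X none * ∏ i ∈ (σ : Finset (Fin d))ᶜ, X (some i)) =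
      fun v => monomial (reesExp Δ v) 1 := by
    ext1 v
    rcases v with i | σ
    · rfl
    · simp [reesExp, X, monomial_mul, ← monomial_sum_one]
  rw [LofPM, hX]
  exact congrArg (fun φ : _ →ₐ[k] _ => RingHom.ker φ.toRingHom)
    (aeval_single_eq_mapDomainAlgHom _)

lemma toricIdealPM_eq_ker :
    toricIdealPM k Δ = RingHom.ker (mapDomainAlgHom k k (wtDeg Δ)).toRingHom := by
  rw [toricIdealPM, aeval_single_eq_mapDomainAlgHom]
  rfl

lemma LofPM_eq_toricIdealPM : LofPM k Δ = toricIdealPM k Δ := by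
  rw [LofPM_eq_ker, toricIdealPM_eq_ker]
  exact le_antisymm (ker_mapDomainAlgHom_le fun _ _ => (reesDeg_eq_iff_wtDeg_eq Δ).mp)
    (ker_mapDomainAlgHom_le fun _ _ => (reesDeg_eq_iff_wtDeg_eq Δ).mpr)

instance LofPM_isPrime : (LofPM k Δ).IsPrime := RingHom.ker_isPrime _

lemma xProd_notMem_LofPM : xProd k Δ ∉ LofPM k Δ := by
  simp [LofPM, xProd, Finset.prod_ne_zero_iff, X_ne_zero]

lemma reesExp_inl_add_reesExp_inr {σ τ : {x // x ∈ Δ.facets}} {i j : Fin d}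
    (hi : i ∈ (σ : Finset (Fin d))) (hj : j ∈ (τ : Finset (Fin d)))
    (he : (σ : Finset (Fin d)).erase i = (τ : Finset (Fin d)).erase j) :
    reesExp Δ (Sum.inl i) + reesExp Δ (Sum.inr σ) =
      reesExp Δ (Sum.inl j) + reesExp Δ (Sum.inr τ) := by
  have key : ∀ s : Finset (Fin d), ∀ a ∈ s,
      Finsupp.single (some a) 1 + ∑ l ∈ sᶜ, Finsupp.single (some l) 1
        = ∑ l ∈ (s.erase a)ᶜ, Finsupp.single (some l) 1 := fun s a ha => by
    rw [Finset.compl_erase, Finset.sum_insert (by simpa using ha)]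
  simp only [reesExp, Sum.elim_inl, Sum.elim_inr]
  rw [add_left_comm, key _ _ hi, add_left_comm, key _ _ hj, he]

lemma JofPM_le_LofPM : JofPM k Δ ≤ LofPM k Δ := by
  rw [JofPM, Ideal.span_le, LofPM_eq_ker]
  rintro _ ⟨σ, τ, i, j, hi, hj, he, rfl⟩
  simp only [X, ← monomial_add_one]
  refine (single_sub_single_mem_ker_mapDomainAlgHom_iff _ _ _).mpr ?_
  simpa using reesExp_inl_add_reesExp_inr Δ hi hj he

lemma exists_binomial_mem_JofPM (σ τ : {x // x ∈ Δ.facets}) :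
    ∃ a b : PMVars Δ →₀ ℕ, reesDeg Δ a none = 0 ∧ reesDeg Δ b none = 0 ∧
      monomial (a + Finsupp.single (Sum.inr σ) 1) (1 : k) -
        monomial (b + Finsupp.single (Sum.inr τ) 1) 1 ∈ JofPM k Δ := by
  obtain ⟨w⟩ := Δ.connected.preconnected σ τ
  induction w with
  | nil => exact ⟨0, 0, by simp, by simp, by simp⟩
  | @cons u v x huv _ ih =>
    obtain ⟨a, b, ha, hb, hab⟩ := ih
    have hcard : ((u : Finset (Fin d)) ∩ v).card = n := by
      rcases (SimpleGraph.fromRel_adj _ _ _).mp huv |>.2 with h | h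
      · exact h
      · rwa [Finset.inter_comm]
    obtain ⟨i, hi, j, hj, he⟩ := Finset.exists_erase_eq_erase_of_card_eq
      (by rw [Δ.card_eq _ u.2, hcard]) (by rw [Δ.card_eq _ v.2, hcard])
    set ei := Finsupp.single (Sum.inl i : PMVars Δ) 1
    set ej := Finsupp.single (Sum.inl j : PMVars Δ) 1
    have hgen : monomial (ei + Finsupp.single (Sum.inr u) 1) (1 : k) -
        monomial (ej + Finsupp.single (Sum.inr v) 1) 1 ∈ JofPM k Δ := by
      simp only [monomial_add_one]
      exact Ideal.subset_span ⟨u, v, i, j, hi, hj, he, rfl⟩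
    refine ⟨a + ei, b + ej, by simp [ei, ha], by simp [ej, hb], ?_⟩
    have hsplit : monomial (a + ei + Finsupp.single (Sum.inr u) 1) (1 : k) -
          monomial (b + ej + Finsupp.single (Sum.inr x) 1) 1 =
        monomial a 1 * (monomial (ei + Finsupp.single (Sum.inr u) 1) 1 -
            monomial (ej + Finsupp.single (Sum.inr v) 1) 1) +
          monomial ej 1 * (monomial (a + Finsupp.single (Sum.inr v) 1) 1 -
            monomial (b + Finsupp.single (Sum.inr x) 1) 1) := by
      simp only [monomial_add_one]
      ring
    rw [hsplit]
    exact add_mem (Ideal.mul_mem_left _ _ hgen) (Ideal.mul_mem_left _ _ hab)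

lemma eq_of_reesDeg_eq_of_none_eq_zero {f g : PMVars Δ →₀ ℕ} (hfg : reesDeg Δ f = reesDeg Δ g)
    (hf : reesDeg Δ f none = 0) : f = g := by
  have hy : ∀ h : PMVars Δ →₀ ℕ, reesDeg Δ h none = 0 → ∀ σ, h (Sum.inr σ) = 0 :=
    fun h hh σ => by
      rw [reesDeg_none, Finset.sum_eq_zero_iff] at hh
      exact hh σ (Finset.mem_univ σ)
  have hfy := hy f hf
  have hgy := hy g (hfg ▸ hf)
  ext (i | σ)
  · simpa [reesDeg_some, hfy, hgy] using congrArg (· (some i)) hfg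
  · rw [hfy, hgy]

lemma exists_single_add_eq {f : PMVars Δ →₀ ℕ} {m : ℕ} (hf : reesDeg Δ f none = m + 1) :
    ∃ σ f', f = Finsupp.single (Sum.inr σ) 1 + f' := by
  rw [reesDeg_none] at hf
  obtain ⟨σ, -, hσ⟩ := Finset.exists_ne_zero_of_sum_ne_zero (by rw [hf]; exact m.succ_ne_zero)
  exact ⟨σ, exists_add_of_le (Finsupp.single_le_iff.mpr (Nat.one_le_iff_ne_zero.mpr hσ))⟩

lemma monomial_dvd_xProd_pow {a : PMVars Δ →₀ ℕ} (ha : reesDeg Δ a none = 0) :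
    monomial a (1 : k) ∣ xProd k Δ ^ ∑ v ∈ a.support, a v := by
  rw [← prod_X_pow_eq_monomial, ← Finset.prod_pow_eq_pow_sum]
  refine Finset.prod_dvd_prod_of_dvd _ _ fun v hv => pow_dvd_pow_of_dvd ?_ _
  rcases v with i | σ
  · exact Finset.dvd_prod_of_mem _ (Finset.mem_univ i)
  · rw [reesDeg_none, Finset.sum_eq_zero_iff] at ha
    exact absurd (ha σ (Finset.mem_univ σ)) (Finsupp.mem_support_iff.mp hv)

lemma mem_JsatPM_of_monomial_mul_mem {a : PMVars Δ →₀ ℕ} (ha : reesDeg Δ a none = 0)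
    {q : MvPolynomial (PMVars Δ) k} (hq : monomial a 1 * q ∈ JsatPM k Δ) : q ∈ JsatPM k Δ := by
  obtain ⟨c, hc⟩ := monomial_dvd_xProd_pow k Δ ha
  refine Ideal.mem_iSup_colon_span_pow_of_pow_mul_mem (N := ∑ v ∈ a.support, a v) ?_
  rw [hc, mul_comm _ c, mul_assoc]
  exact Ideal.mul_mem_left _ _ hq

lemma monomial_sub_monomial_mem_JsatPM (m : ℕ) :
    ∀ f g : PMVars Δ →₀ ℕ, reesDeg Δ f none = m → reesDeg Δ f = reesDeg Δ g →
      monomial f (1 : k) - monomial g 1 ∈ JsatPM k Δ := by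
  induction m with
  | zero =>
    intro f g hf hfg
    rw [eq_of_reesDeg_eq_of_none_eq_zero Δ hfg hf, sub_self]
    exact zero_mem _
  | succ m ih =>
    intro f g hf hfg
    obtain ⟨σ, f', rfl⟩ := exists_single_add_eq Δ hf
    obtain ⟨τ, g', rfl⟩ := exists_single_add_eq Δ (hfg ▸ hf)
    obtain ⟨a, b, ha, hb, hab⟩ := exists_binomial_mem_JofPM k Δ σ τ
    set eσ := Finsupp.single (Sum.inr σ : PMVars Δ) 1
    set eτ := Finsupp.single (Sum.inr τ : PMVars Δ) 1
    have hab' : reesDeg Δ (a + eσ) = reesDeg Δ (b + eτ) :=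
      (single_sub_single_mem_ker_mapDomainAlgHom_iff _ _ _).mp
        (LofPM_eq_ker k Δ ▸ JofPM_le_LofPM k Δ hab)
    have hdeg : reesDeg Δ (b + f') none = m := by
      simp only [eσ, map_add, Finsupp.add_apply, reesDeg_single, one_smul,
        reesExp_inr_none] at hf ⊢
      omega
    have hwt : reesDeg Δ (b + f') = reesDeg Δ (a + g') := by
      refine add_right_cancel (b := reesDeg Δ eτ) ?_
      calc reesDeg Δ (b + f') + reesDeg Δ eτ = reesDeg Δ (b + eτ) + reesDeg Δ f' := by
            simp only [map_add]; abel
        _ = reesDeg Δ a + reesDeg Δ (eσ + f') := by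
            rw [← hab']; simp only [map_add]; abel
        _ = reesDeg Δ (a + g') + reesDeg Δ eτ := by
            rw [hfg]; simp only [map_add]; abel
    -- Trade `y_σ` for `y_τ` using `x^a y_σ ≡ x^b y_τ`; the remaining binomial has lower `y`-degree.
    have hsplit : monomial a (1 : k) * (monomial (eσ + f') 1 - monomial (eτ + g') 1) =
        monomial f' 1 * (monomial (a + eσ) 1 - monomial (b + eτ) 1) +
          monomial eτ 1 * (monomial (b + f') 1 - monomial (a + g') 1) := by
      simp only [monomial_add_one]
      ring
    refine mem_JsatPM_of_monomial_mul_mem k Δ ha ?_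
    rw [hsplit]
    exact add_mem (Ideal.mul_mem_left _ _ (Ideal.le_iSup_colon_span_pow hab))
      (Ideal.mul_mem_left _ _ (ih _ _ hdeg hwt))

lemma LofPM_le_JsatPM : LofPM k Δ ≤ JsatPM k Δ := by
  intro p hp
  rw [LofPM_eq_ker] at hp
  refine Submodule.span_le (p := (JsatPM k Δ).restrictScalars k).mpr ?_
    (mem_span_fiberBinomials_of_mapDomain_eq_zero (h := reesDeg Δ) (by simpa using hp))
  rintro _ ⟨f, g, hfg, rfl⟩
  exact monomial_sub_monomial_mem_JsatPM k Δ _ f g rfl hfg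

end

theorem Jsat_eq_Rees_eq_toric {n d : ℕ} (k : Type*) [Field k]
    (Δ : OrientedPseudomanifold n d) :
    JsatPM k Δ = LofPM k Δ ∧ LofPM k Δ = toricIdealPM k Δ ∧
    (JsatPM k Δ).IsPrime ∧ IsToricIdeal (JsatPM k Δ) := by
  have hJsat : JsatPM k Δ = LofPM k Δ :=
    le_antisymm
      (Ideal.iSup_colon_span_pow_le_of_isPrime (JofPM_le_LofPM k Δ) (xProd_notMem_LofPM k Δ))
      (LofPM_le_JsatPM k Δ)
  have hL := LofPM_eq_toricIdealPM k Δ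
  refine ⟨hJsat, hL, hJsat ▸ LofPM_isPrime k Δ, d + 1, wtv Δ, ?_⟩
  rw [hJsat, hL]
  rfl
end

section
/- Let Δ be an oriented n-dimensional pseudomanifold on d vertices and f = x_1⋯x_d. Then the extensions of J(Δ) and of the toric ideal I_𝒜 to the localization S_f coincide: J(Δ)S_f = I_𝒜 S_f. -/
open Finset

open MvPolynomial

/-!
Send `x_i ↦ x_i` and `y_σ ↦ u · x^{-σ}` into `k[x_1^{±1}, …, x_d^{±1}, u]`. Followed by the
embedding `(a, m) ↦ m e₀ + a` of exponent monoids this is the toric map, so `I_𝒜` is the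
kernel of this Laurent map, and it contains `J(Δ)`. Conversely, modulo `J(Δ) S_f` every `x_i`
is a unit and, the dual graph being connected, all monomials `y_σ x^σ` have one common image;
sending `u` there gives a map back from the Laurent ring through which `S → S_f / J(Δ) S_f`
factors, so the kernel of the Laurent map dies in `S_f / J(Δ) S_f`.
-/

lemma Finset.exists_erase_eq_erase_of_card_inter {α : Type*} [DecidableEq α]
    {s t : Finset α} {m : ℕ} (hs : s.card = m + 1) (ht : t.card = m + 1)
    (hst : (s ∩ t).card = m) : ∃ i ∈ s, ∃ j ∈ t, s.erase i = t.erase j := by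
  obtain ⟨i, hi⟩ : ∃ i, s \ t = {i} := Finset.card_eq_one.mp (by
    have := Finset.card_inter_add_card_sdiff s t; omega)
  obtain ⟨j, hj⟩ : ∃ j, t \ s = {j} := Finset.card_eq_one.mp (by
    have := Finset.card_inter_add_card_sdiff t s; rw [Finset.inter_comm] at this; omega)
  have hi' := Finset.mem_sdiff.mp (hi ▸ Finset.mem_singleton_self i)
  have hj' := Finset.mem_sdiff.mp (hj ▸ Finset.mem_singleton_self j)
  refine ⟨i, hi'.1, j, hj'.1, ?_⟩
  rw [Finset.erase_eq, Finset.erase_eq, ← hi, ← hj, Finset.sdiff_sdiff_self_left,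
    Finset.sdiff_sdiff_self_left, Finset.inter_comm]

noncomputable section

namespace OrientedPseudomanifold

variable {n d : ℕ} (k : Type*) [Field k] (Δ : OrientedPseudomanifold n d)

def laurentExp : PMVars Δ → (Fin d →₀ ℤ) × ℕ :=
  Sum.elim (fun i => (Finsupp.single i 1, 0))
    (fun σ => (-∑ l ∈ (σ : Finset (Fin d)), Finsupp.single l 1, 1))

def laurentMap : MvPolynomial (PMVars Δ) k →ₐ[k] AddMonoidAlgebra k ((Fin d →₀ ℤ) × ℕ) :=
  aeval fun v => AddMonoidAlgebra.single (laurentExp Δ v) 1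

def consExp (d : ℕ) : (Fin d →₀ ℤ) × ℕ →+ (Fin (d + 1) →₀ ℤ) :=
  (Finsupp.mapDomain.addMonoidHom Fin.succ).coprod (multiplesHom _ (Finsupp.single 0 1))

lemma consExp_apply_zero (a : Fin d →₀ ℤ) (m : ℕ) : consExp d (a, m) 0 = m := by
  have : Finsupp.mapDomain Fin.succ a 0 = 0 :=
    Finsupp.mapDomain_of_notMem_range _ _ (by simp)
  simp [consExp, this]

lemma consExp_apply_succ (a : Fin d →₀ ℤ) (m : ℕ) (i : Fin d) :
    consExp d (a, m) i.succ = a i := by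
  simp [consExp, Finsupp.mapDomain_apply (Fin.succ_injective d)]

lemma consExp_injective : Function.Injective (consExp d) := by
  rintro ⟨a, m⟩ ⟨b, l⟩ h
  have hm : (m : ℤ) = l := by rw [← consExp_apply_zero a m, ← consExp_apply_zero b l, h]
  refine Prod.ext (Finsupp.ext fun i => ?_) (Int.ofNat_inj.mp hm)
  rw [← consExp_apply_succ a m, ← consExp_apply_succ b l, h]

lemma consExp_laurentExp (v : PMVars Δ) : consExp d (laurentExp Δ v) = wtv Δ v := by
  cases v with
  | inl i => simp [consExp, laurentExp, wtv, Finsupp.mapDomain_single]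
  | inr σ =>
    simp only [consExp, laurentExp, wtv, Sum.elim_inr, AddMonoidHom.coprod_apply, map_neg,
      map_sum, Finsupp.mapDomain.addMonoidHom_apply, Finsupp.mapDomain_single,
      multiplesHom_apply, one_nsmul]
    abel

lemma toricIdealPM_eq_ker_laurentMap : toricIdealPM k Δ = RingHom.ker (laurentMap k Δ) := by
  have hfactor : (AddMonoidAlgebra.mapDomainAlgHom k k (consExp d)).comp (laurentMap k Δ) =
      aeval fun v => AddMonoidAlgebra.single (wtv Δ v) 1 := by
    ext v
    simp [laurentMap, consExp_laurentExp]
  rw [toricIdealPM, ← hfactor]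
  exact RingHom.ker_comp_of_injective _ (AddMonoidAlgebra.mapDomain_injective consExp_injective)

lemma JofPM_le_ker_laurentMap : JofPM k Δ ≤ RingHom.ker (laurentMap k Δ) := by
  rw [JofPM, Ideal.span_le]
  rintro p ⟨σ, τ, i, j, hi, hj, he, rfl⟩
  have hexp : laurentExp Δ (Sum.inl i) + laurentExp Δ (Sum.inr σ) =
      laurentExp Δ (Sum.inl j) + laurentExp Δ (Sum.inr τ) := by
    refine Prod.ext ?_ rfl
    simp only [laurentExp, Sum.elim_inl, Sum.elim_inr, Prod.fst_add]
    rw [← Finset.add_sum_erase _ _ hi, ← Finset.add_sum_erase _ _ hj, he]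
    abel
  simp [laurentMap, AddMonoidAlgebra.single_mul_single, hexp]

abbrev JQuot : Type _ := Localization.Away (xProd k Δ) ⧸
  (JofPM k Δ).map (algebraMap (MvPolynomial (PMVars Δ) k) (Localization.Away (xProd k Δ)))

def toJQuot : MvPolynomial (PMVars Δ) k →ₐ[k] JQuot k Δ :=
  (Ideal.Quotient.mkₐ k _).comp (IsScalarTower.toAlgHom k _ _)

lemma ker_toJQuot : RingHom.ker (toJQuot k Δ) =
    ((JofPM k Δ).map (algebraMap _ (Localization.Away (xProd k Δ)))).comap (algebraMap _ _) := by
  ext p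
  exact RingHom.mem_ker.trans Ideal.Quotient.eq_zero_iff_mem

lemma isUnit_toJQuot_X_inl (i : Fin d) : IsUnit (toJQuot k Δ (X (Sum.inl i))) := by
  have hf : IsUnit (toJQuot k Δ (xProd k Δ)) :=
    (IsLocalization.Away.algebraMap_isUnit (xProd k Δ)).map (Ideal.Quotient.mk _)
  exact isUnit_of_dvd_unit
    (map_dvd _ (Finset.dvd_prod_of_mem (fun l => X (Sum.inl l)) (Finset.mem_univ i))) hf

lemma toJQuot_X_mul_X_eq {σ τ : {x // x ∈ Δ.facets}} {i j : Fin d}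
    (hi : i ∈ (σ : Finset (Fin d))) (hj : j ∈ (τ : Finset (Fin d)))
    (he : (σ : Finset (Fin d)).erase i = (τ : Finset (Fin d)).erase j) :
    toJQuot k Δ (X (Sum.inl i) * X (Sum.inr σ)) =
      toJQuot k Δ (X (Sum.inl j) * X (Sum.inr τ)) := by
  rw [← sub_eq_zero, ← map_sub, ← RingHom.mem_ker, ker_toJQuot]
  exact Ideal.mem_map_of_mem _ (Ideal.subset_span ⟨σ, τ, i, j, hi, hj, he, rfl⟩)

def facetMonomial (σ : {x // x ∈ Δ.facets}) : MvPolynomial (PMVars Δ) k :=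
  X (Sum.inr σ) * ∏ l ∈ (σ : Finset (Fin d)), X (Sum.inl l)

lemma toJQuot_facetMonomial_eq_of_card_inter {σ τ : {x // x ∈ Δ.facets}}
    (h : ((σ : Finset (Fin d)) ∩ τ).card = n) :
    toJQuot k Δ (facetMonomial k Δ σ) = toJQuot k Δ (facetMonomial k Δ τ) := by
  obtain ⟨i, hi, j, hj, he⟩ := Finset.exists_erase_eq_erase_of_card_inter
    (Δ.card_eq _ σ.2) (Δ.card_eq _ τ.2) h
  rw [facetMonomial, facetMonomial, ← Finset.mul_prod_erase _ _ hi,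
    ← Finset.mul_prod_erase _ _ hj, ← mul_assoc, ← mul_assoc, mul_comm (X (Sum.inr σ)),
    mul_comm (X (Sum.inr τ)), map_mul, toJQuot_X_mul_X_eq k Δ hi hj he, ← map_mul, he]

lemma toJQuot_facetMonomial_eq (σ τ : {x // x ∈ Δ.facets}) :
    toJQuot k Δ (facetMonomial k Δ σ) = toJQuot k Δ (facetMonomial k Δ τ) := by
  obtain ⟨w⟩ := Δ.connected.preconnected σ τ
  induction w with
  | nil => rfl
  | cons hadj _ ih =>
    refine Eq.trans ?_ ih
    obtain ⟨-, h | h⟩ := SimpleGraph.fromRel_adj _ _ _ |>.mp hadj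
    · exact toJQuot_facetMonomial_eq_of_card_inter k Δ h
    · exact (toJQuot_facetMonomial_eq_of_card_inter k Δ h).symm

def unitX (i : Fin d) : (JQuot k Δ)ˣ := (isUnit_toJQuot_X_inl k Δ i).unit

def xZPow : (Fin d →₀ ℤ) →+ Additive (JQuot k Δ)ˣ :=
  Finsupp.liftAddHom (M := ℤ) (N := Additive (JQuot k Δ)ˣ)
    fun i => zmultiplesHom _ (Additive.ofMul (unitX k Δ i))

lemma xZPow_single (i : Fin d) :
    xZPow k Δ (Finsupp.single i 1) = Additive.ofMul (unitX k Δ i) := by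
  simp [xZPow]

/-- `(a, m) ↦ x^a u^m`, where `u` is the image of `y_σ x^σ` for any facet `σ`
(`toJQuot_facetMonomial_eq`). -/
def laurentLift : Multiplicative ((Fin d →₀ ℤ) × ℕ) →* JQuot k Δ where
  toFun z := ((xZPow k Δ z.toAdd.1).toMul : JQuot k Δ) *
    toJQuot k Δ (facetMonomial k Δ Δ.connected.nonempty.some) ^ z.toAdd.2
  map_one' := by simp
  map_mul' x y := by
    simp only [toAdd_mul, Prod.fst_add, Prod.snd_add, map_add, toMul_add, Units.val_mul, pow_add]
    ring

lemma laurentLift_laurentExp (v : PMVars Δ) :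
    laurentLift k Δ (Multiplicative.ofAdd (laurentExp Δ v)) = toJQuot k Δ (X v) := by
  cases v with
  | inl i => simp [laurentLift, laurentExp, xZPow_single, unitX]
  | inr σ =>
    simp only [laurentLift, laurentExp, MonoidHom.coe_mk, OneHom.coe_mk, toAdd_ofAdd,
      Sum.elim_inr, map_neg, map_sum, xZPow_single, toMul_neg, toMul_sum, toMul_ofMul, pow_one,
      Units.inv_mul_eq_iff_eq_mul]
    rw [toJQuot_facetMonomial_eq k Δ _ σ]
    simp [facetMonomial, unitX, mul_comm]

lemma lift_laurentLift_comp_laurentMap :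
    (AddMonoidAlgebra.lift k _ _ (laurentLift k Δ)).comp (laurentMap k Δ) = toJQuot k Δ := by
  ext v
  simp [laurentMap, laurentLift_laurentExp]

lemma ker_laurentMap_le_ker_toJQuot :
    RingHom.ker (laurentMap k Δ) ≤ RingHom.ker (toJQuot k Δ) := by
  intro p hp
  rw [RingHom.mem_ker, ← lift_laurentLift_comp_laurentMap, AlgHom.comp_apply,
    RingHom.mem_ker.mp hp, map_zero]

end OrientedPseudomanifold

end

theorem JofPM_localization_eq_toric {n d : ℕ} (k : Type*) [Field k]
    (Δ : OrientedPseudomanifold n d) :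
    Ideal.map (algebraMap (MvPolynomial (PMVars Δ) k) (Localization.Away (xProd k Δ)))
        (JofPM k Δ) =
      Ideal.map (algebraMap (MvPolynomial (PMVars Δ) k) (Localization.Away (xProd k Δ)))
        (toricIdealPM k Δ) := by
  rw [Δ.toricIdealPM_eq_ker_laurentMap k]
  refine le_antisymm (Ideal.map_mono (Δ.JofPM_le_ker_laurentMap k)) ?_
  rw [Ideal.map_le_iff_le_comap, ← Δ.ker_toJQuot k]
  exact Δ.ker_laurentMap_le_ker_toJQuot k
end

section
/- Let Δ be an oriented n-dimensional pseudomanifold on d vertices that contains a subcomplex Δ' which is a bipyramid with apexes the vertices 1 and 2 over an (n−1)-dimensional complex Δ'' with facets σ_1,…,σ_k; that is, σ_i ∪ {1} and σ_i ∪ {2} are facets of Δ for all i. Set y_i = y_{σ_i∪{2}} and y'_i = y_{σ_i∪{1}}. Then J_Δ contains all 2×2 minors of the 2×(k+1) matrix with rows (x_1, y_1, …, y_k) and (x_2, y'_1, …, y'_k); that is, x_1 y'_i − x_2 y_i ∈ J_Δ and y_i y'_j − y_j y'_i ∈ J_Δ for all i, j. -/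
open Finset

open MvPolynomial

/-!
The facets `σ_i ∪ {v₁}` and `σ_i ∪ {v₂}` share the ridge `σ_i`, so
`x_{v₁} y'_i − x_{v₂} y_i` is one of the generators of `J(Δ)`. For the minors,
`x_{v₁} (y_i y'_j − y_j y'_i) = y_i (x_{v₁} y'_j − x_{v₂} y_j) − y_j (x_{v₁} y'_i − x_{v₂} y_i)`
lies in `J(Δ)`, and `x_{v₁}` divides `x₁⋯x_d`, so the minor lies in the saturation `J_Δ`.
-/

theorem Ideal.mul_sub_mul_mem_of_sub_mem {R : Type*} [CommRing R] {I : Ideal R}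
    {a c b b' e e' : R} (hb : a * b' - c * b ∈ I) (he : a * e' - c * e ∈ I) :
    a * (b * e' - e * b') ∈ I := by
  have h := I.sub_mem (I.mul_mem_left b he) (I.mul_mem_left e hb)
  convert h using 1
  ring

section

variable {n d : ℕ} (k : Type*) [Field k] (Δ : OrientedPseudomanifold n d)

theorem JofPM_le_JsatPM : JofPM k Δ ≤ JsatPM k Δ := fun p hp => by
  apply Submodule.mem_iSup_of_mem 0
  rwa [Ideal.mem_colon_span_singleton, pow_zero, mul_one]

theorem mem_JsatPM_of_X_mul_mem {p : MvPolynomial (PMVars Δ) k} (v : Fin d)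
    (hp : X (Sum.inl v) * p ∈ JofPM k Δ) : p ∈ JsatPM k Δ := by
  apply Submodule.mem_iSup_of_mem 1
  rw [Ideal.mem_colon_span_singleton, pow_one, xProd,
    ← Finset.mul_prod_erase Finset.univ _ (Finset.mem_univ v), ← mul_assoc, mul_comm p]
  exact Ideal.mul_mem_right _ _ hp

theorem X_mul_X_sub_mem_JofPM_of_insert {s : Finset (Fin d)} {v₁ v₂ : Fin d}
    (hv₁ : v₁ ∉ s) (hv₂ : v₂ ∉ s) (h₁ : insert v₁ s ∈ Δ.facets)
    (h₂ : insert v₂ s ∈ Δ.facets) :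
    X (Sum.inl v₁) * X (Sum.inr ⟨insert v₁ s, h₁⟩) -
      X (Sum.inl v₂) * X (Sum.inr ⟨insert v₂ s, h₂⟩) ∈ JofPM k Δ :=
  Ideal.subset_span ⟨⟨insert v₁ s, h₁⟩, ⟨insert v₂ s, h₂⟩, v₁, v₂,
    Finset.mem_insert_self _ _, Finset.mem_insert_self _ _,
    by rw [Finset.erase_insert hv₁, Finset.erase_insert hv₂], rfl⟩

end

theorem bipyramid_gives_minors_general {n d m : ℕ} (k : Type*) [Field k]
    (Δ : OrientedPseudomanifold n d) (v₁ v₂ : Fin d)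
    (σ : Fin m → Finset (Fin d))
    (hv₁ : ∀ i, v₁ ∉ σ i) (hv₂ : ∀ i, v₂ ∉ σ i)
    (hfac₁ : ∀ i, insert v₁ (σ i) ∈ Δ.facets)
    (hfac₂ : ∀ i, insert v₂ (σ i) ∈ Δ.facets) :
    (∀ i : Fin m,
      X (Sum.inl v₁) * X (Sum.inr ⟨insert v₁ (σ i), hfac₁ i⟩) -
        X (Sum.inl v₂) * X (Sum.inr ⟨insert v₂ (σ i), hfac₂ i⟩) ∈ JsatPM k Δ) ∧
    (∀ i j : Fin m,
      X (Sum.inr ⟨insert v₂ (σ i), hfac₂ i⟩) * X (Sum.inr ⟨insert v₁ (σ j), hfac₁ j⟩) -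
        X (Sum.inr ⟨insert v₂ (σ j), hfac₂ j⟩) * X (Sum.inr ⟨insert v₁ (σ i), hfac₁ i⟩)
          ∈ JsatPM k Δ) := by
  have hgen i := X_mul_X_sub_mem_JofPM_of_insert k Δ (hv₁ i) (hv₂ i) (hfac₁ i) (hfac₂ i)
  exact ⟨fun i => JofPM_le_JsatPM k Δ (hgen i), fun i j =>
    mem_JsatPM_of_X_mul_mem k Δ v₁ (Ideal.mul_sub_mul_mem_of_sub_mem (hgen i) (hgen j))⟩

theorem bipyramid_gives_minors {n d m : ℕ} (k : Type*) [Field k]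
    (Δ : OrientedPseudomanifold n d) (v₁ v₂ : Fin d) (hv : v₁ ≠ v₂)
    (σ : Fin m → Finset (Fin d))
    (hcard : ∀ i, (σ i).card = n)
    (hv₁ : ∀ i, v₁ ∉ σ i) (hv₂ : ∀ i, v₂ ∉ σ i)
    (hfac₁ : ∀ i, insert v₁ (σ i) ∈ Δ.facets)
    (hfac₂ : ∀ i, insert v₂ (σ i) ∈ Δ.facets) :
    (∀ i : Fin m,
      X (Sum.inl v₁) * X (Sum.inr ⟨insert v₁ (σ i), hfac₁ i⟩) -
        X (Sum.inl v₂) * X (Sum.inr ⟨insert v₂ (σ i), hfac₂ i⟩) ∈ JsatPM k Δ) ∧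
    (∀ i j : Fin m,
      X (Sum.inr ⟨insert v₂ (σ i), hfac₂ i⟩) * X (Sum.inr ⟨insert v₁ (σ j), hfac₁ j⟩) -
        X (Sum.inr ⟨insert v₂ (σ j), hfac₂ j⟩) * X (Sum.inr ⟨insert v₁ (σ i), hfac₁ i⟩)
          ∈ JsatPM k Δ) :=
  bipyramid_gives_minors_general k Δ v₁ v₂ σ hv₁ hv₂ hfac₁ hfac₂
end

section
/- Let S = Sym(V) be a polynomial ring over a field k, I ⊆ S an ideal, and let x_1,…,x_{n+2} ∈ V be linearly independent and y_1,…,y_{n+2} ∈ V arbitrary linear forms. Set x_{î} = x_1 ∧ ⋯ ∧ x_{i−1} ∧ x_{i+1} ∧ ⋯ ∧ x_{n+2} and ω = Σ_{i=1}^{n+2} (−1)^{i+1} x_{î} ⊗ y_i ∈ Λ^{n+1}V ⊗ V. Then the image of the Koszul differential ∂(ω) in Λ^n V ⊗ (S/I)_2 is zero if and only if x_i y_j − x_j y_i ∈ I for all 1 ≤ i < j ≤ n+2 (i.e., if and only if all 2×2 minors of the matrix with rows (x_1,…,x_{n+2}) and (y_1,…,y_{n+2}) lie in I). -/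
/-!
STATEMENT 15: Let `S` be a polynomial ring over a field `k`, `V = S₁` its space of
linear forms, `I ⊆ S` an ideal, `x₁,…,x_{n+2} ∈ V` linearly independent and
`y₁,…,y_{n+2} ∈ V` arbitrary.  For
`ω = Σᵢ (−1)^{i+1} x_1 ∧ ⋯ ∧ x̂ᵢ ∧ ⋯ ∧ x_{n+2} ⊗ yᵢ ∈ Λ^{n+1}V ⊗ V`,
the Koszul differential `∂(ω)` (computed on decomposables by
`∂(v₁ ∧ ⋯ ∧ v_{n+1} ⊗ w) = Σⱼ (−1)^{j−1} v₁ ∧ ⋯ v̂ⱼ ⋯ ∧ v_{n+1} ⊗ vⱼ·w`) maps to zero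
in `Λ^n V ⊗ (S/I)₂` if and only if `xᵢ yⱼ − xⱼ yᵢ ∈ I` for all `i < j`.
-/

open MvPolynomial TensorProduct

set_option synthInstance.maxHeartbeats 1000000
set_option maxHeartbeats 1000000

noncomputable section

variable {k : Type*} [Field k] {σ : Type*}

/-- The space `V = S₁` of linear forms. -/
abbrev linForms (k : Type*) [Field k] (σ : Type*) : Submodule k (MvPolynomial σ k) :=
  homogeneousSubmodule σ k 1

/-- The Koszul differential of the decomposable element `v₁ ∧ ⋯ ∧ v_{m+1} ⊗ w` of
`Λ^{m+1}V ⊗ V`, viewed inside `ExteriorAlgebra k V ⊗ S`: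
`∂(v₁ ∧ ⋯ ∧ v_{m+1} ⊗ w) = Σⱼ (−1)^{j−1} v₁ ∧ ⋯ v̂ⱼ ⋯ ∧ v_{m+1} ⊗ vⱼ·w`. -/
def koszulOfDecomp (m : ℕ) (v : Fin (m + 1) → linForms k σ) (w : linForms k σ) :
    ExteriorAlgebra k (linForms k σ) ⊗[k] MvPolynomial σ k :=
  ∑ j : Fin (m + 1), ((-1 : ℤ) ^ (j : ℕ)) •
    ((ExteriorAlgebra.ιMulti k m (fun t => v (j.succAbove t)) :
        ExteriorAlgebra k (linForms k σ)) ⊗ₜ[k]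
      ((v j : MvPolynomial σ k) * (w : MvPolynomial σ k)))

/-- The Koszul differential of
`ω = Σᵢ (−1)^{i+1} x₁ ∧ ⋯ x̂ᵢ ⋯ ∧ x_{n+2} ⊗ yᵢ ∈ Λ^{n+1}V ⊗ V`. -/
def koszulOfOmega (n : ℕ) (x y : Fin (n + 2) → linForms k σ) :
    ExteriorAlgebra k (linForms k σ) ⊗[k] MvPolynomial σ k :=
  ∑ i : Fin (n + 2), ((-1 : ℤ) ^ (i : ℕ)) •
    koszulOfDecomp n (fun t => x (i.succAbove t)) (y i)

/-!
Deleting first `xᵢ` and then `xⱼ` from `x₁ ∧ ⋯ ∧ x_{n+2}` gives the same wedge `x_{îĵ}` as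
deleting them in the other order, but with opposite sign, so
`∂ω = Σ_{i<j} ± x_{îĵ} ⊗ (xᵢyⱼ − xⱼyᵢ)`. The wedges `x_{îĵ}` are linearly independent because
the `xᵢ` are, and over a field `Σ e_q ⊗ c_q = 0` with linearly independent `e_q` forces every
`c_q = 0`.
-/

open Set.powersetCard

theorem TensorProduct.sum_tmul_eq_zero_iff_of_linearIndependent {R M N ι : Type*} [CommRing R]
    [AddCommGroup M] [Module R M] [AddCommGroup N] [Module R N] [Module.Flat R N] [Fintype ι]
    {e : ι → M} (he : LinearIndependent R e) (c : ι → N) :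
    ∑ i, e i ⊗ₜ[R] c i = 0 ↔ ∀ i, c i = 0 := by
  classical
  have hinj := Module.Flat.rTensor_preserves_injective_linearMap (M := N) _ he
  have hsum : ∑ i, e i ⊗ₜ[R] c i =
      (Finsupp.linearCombination R e).rTensor N
        ((finsuppScalarLeft R N ι).symm (∑ i, Finsupp.single i (c i))) := by
    simp [map_sum, finsuppScalarLeft_symm_apply_single]
  rw [hsum, ← map_zero ((Finsupp.linearCombination R e).rTensor N), hinj.eq_iff,
    LinearEquiv.map_eq_zero_iff, ← Finsupp.equivFunOnFinite_symm_eq_sum]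
  simp [Finsupp.ext_iff]

theorem Fintype.sum_sum_of_diag_eq_zero {ι M : Type*} [Fintype ι] [LinearOrder ι]
    [AddCommMonoid M] (f : ι → ι → M) (hf : ∀ i, f i i = 0) :
    ∑ i, ∑ j, f i j = ∑ q : {q : ι × ι // q.1 < q.2}, (f q.1.1 q.1.2 + f q.1.2 q.1.1) := by
  classical
  have hswap : ∑ q : {q : ι × ι // q.1 < q.2}, f q.1.2 q.1.1
      = ∑ q : {q : ι × ι // q.2 < q.1}, f q.1.1 q.1.2 :=
    Fintype.sum_equiv
      (Equiv.subtypeEquiv (q := fun q : ι × ι => q.2 < q.1) (Equiv.prodComm ι ι) fun _ => Iff.rfl)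
      (fun q => f q.1.2 q.1.1) (fun q => f q.1.1 q.1.2) fun _ => rfl
  rw [Finset.sum_add_distrib, hswap, ← Fintype.sum_prod_type',
    ← Finset.sum_subtype {q | q.1 < q.2} (by simp) fun q : ι × ι => f q.1 q.2,
    ← Finset.sum_subtype {q | q.2 < q.1} (by simp) fun q : ι × ι => f q.1 q.2,
    Finset.sum_filter, Finset.sum_filter, ← Finset.sum_add_distrib]
  refine Finset.sum_congr rfl fun q _ => ?_
  rcases lt_trichotomy q.1 q.2 with h | h | h
  · simp [h, h.not_gt]
  · simp [h, hf]
  · simp [h, h.not_gt]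

theorem ExteriorAlgebra.ιMulti_family_ofFinEmbEquiv {R M I : Type*} [CommRing R] [AddCommGroup M]
    [Module R M] [LinearOrder I] {n : ℕ} (v : I → M) (f : Fin n ↪o I) :
    ιMulti_family R n v (ofFinEmbEquiv f) = ιMulti R n (v ∘ f) := by
  rw [ιMulti_family, Equiv.symm_apply_apply]

theorem ExteriorAlgebra.ιMulti_family_linearIndependent_field {K E I : Type*} [Field K]
    [AddCommGroup E] [Module K E] [LinearOrder I] {n : ℕ} {v : I → E}
    (hv : LinearIndependent K v) : LinearIndependent K (ιMulti_family K n v) :=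
  (exteriorPower.ιMulti_family_linearIndependent_field (n := n) hv).map' _ (Submodule.ker_subtype _)

theorem Fin.neg_one_pow_val_eq_of_succAbove {R : Type*} [Monoid R] [HasDistribNeg R] {m : ℕ}
    (i : Fin (m + 1)) (j : Fin m) :
    (-1 : R) ^ (j : ℕ) = (if i < i.succAbove j then -1 else 1) * (-1) ^ (i.succAbove j : ℕ) := by
  rcases i.castSucc_lt_or_lt_succ j with h | h
  · rw [Fin.succAbove_of_castSucc_lt _ _ h, if_neg (lt_asymm h)]
    simp
  · rw [Fin.succAbove_of_lt_succ _ _ h, if_pos h, Fin.val_succ, pow_succ]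
    simp

def Fin.pairCompl {n : ℕ} {a b : Fin (n + 2)} (h : a ≠ b) : Set.powersetCard (Fin (n + 2)) n :=
  ⟨{a, b}ᶜ, by
    rw [Set.powersetCard.mem_iff, Finset.card_compl, Finset.card_pair h, Fintype.card_fin]; rfl⟩

theorem Fin.pairCompl_comm {n : ℕ} {a b : Fin (n + 2)} (h : a ≠ b) :
    Fin.pairCompl h.symm = Fin.pairCompl h :=
  Subtype.ext (by simp [Fin.pairCompl, Finset.pair_comm])

theorem Fin.pairCompl_injective {n : ℕ} :
    Function.Injective fun q : {q : Fin (n + 2) × Fin (n + 2) // q.1 < q.2} =>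
      Fin.pairCompl q.2.ne := by
  rintro ⟨⟨a, b⟩, hab⟩ ⟨⟨c, d⟩, hcd⟩ h
  have hpair : ({a, b} : Finset (Fin (n + 2))) = {c, d} :=
    compl_injective (congrArg Subtype.val h)
  rw [← Finset.coe_inj, Finset.coe_pair, Finset.coe_pair] at hpair
  rcases Set.pair_eq_pair_iff.mp hpair with ⟨rfl, rfl⟩ | ⟨rfl, rfl⟩
  · rfl
  · exact absurd (hab.trans hcd) (lt_irrefl _)

theorem Fin.ofFinEmbEquiv_succAboveOrderEmb_trans {n : ℕ} (i : Fin (n + 2)) (j : Fin (n + 1)) :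
    ofFinEmbEquiv ((Fin.succAboveOrderEmb j).trans (Fin.succAboveOrderEmb i)) =
      Fin.pairCompl (Fin.succAbove_ne i j).symm := by
  ext l
  simp only [Set.powersetCard.mem_coe_iff, mem_ofFinEmbEquiv_iff_mem_range, Set.mem_range,
    RelEmbedding.coe_trans, Function.comp_apply, Fin.succAboveOrderEmb_apply, Fin.pairCompl,
    Finset.mem_compl, Finset.mem_insert, Finset.mem_singleton, not_or]
  constructor
  · rintro ⟨t, rfl⟩
    exact ⟨Fin.succAbove_ne _ _, fun h => Fin.succAbove_ne j t (Fin.succAbove_right_injective h)⟩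
  · rintro ⟨hi, hj⟩
    obtain ⟨m, rfl⟩ := Fin.exists_succAbove_eq hi
    obtain ⟨t, rfl⟩ := Fin.exists_succAbove_eq fun h => hj (congrArg i.succAbove h)
    exact ⟨t, rfl⟩

theorem koszulOfOmega_eq_sum_sum (n : ℕ) (x y : Fin (n + 2) → linForms k σ) :
    koszulOfOmega n x y = ∑ i, ∑ l, if h : i = l then 0 else
      ExteriorAlgebra.ιMulti_family k n x (Fin.pairCompl h) ⊗ₜ[k]
        ((if i < l then -1 else 1) * (-1) ^ ((i : ℕ) + l) *
          ((x l : MvPolynomial σ k) * (y i : MvPolynomial σ k))) := by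
  unfold koszulOfOmega koszulOfDecomp
  refine Finset.sum_congr rfl fun i _ => ?_
  rw [Fin.sum_univ_succAbove _ i, dif_pos rfl, zero_add, Finset.smul_sum]
  refine Finset.sum_congr rfl fun j _ => ?_
  rw [dif_neg (Fin.succAbove_ne i j).symm, ← Fin.ofFinEmbEquiv_succAboveOrderEmb_trans,
    ExteriorAlgebra.ιMulti_family_ofFinEmbEquiv, ← tmul_smul, ← tmul_smul,
    zsmul_eq_mul, zsmul_eq_mul, Fin.neg_one_pow_val_eq_of_succAbove i j]
  push_cast
  congr 1
  ring

theorem koszulOfOmega_eq_sum_minors (n : ℕ) (x y : Fin (n + 2) → linForms k σ) :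
    koszulOfOmega n x y = ∑ q : {q : Fin (n + 2) × Fin (n + 2) // q.1 < q.2},
      ExteriorAlgebra.ιMulti_family k n x (Fin.pairCompl q.2.ne) ⊗ₜ[k]
        ((-1) ^ ((q.1.1 : ℕ) + q.1.2) *
          ((x q.1.1 : MvPolynomial σ k) * (y q.1.2 : MvPolynomial σ k) -
            (x q.1.2 : MvPolynomial σ k) * (y q.1.1 : MvPolynomial σ k))) := by
  rw [koszulOfOmega_eq_sum_sum, Fintype.sum_sum_of_diag_eq_zero _ fun i => dif_pos rfl]
  refine Finset.sum_congr rfl fun ⟨⟨a, b⟩, hab⟩ _ => ?_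
  dsimp only at hab ⊢
  rw [dif_neg hab.ne, dif_neg hab.ne', if_pos hab, if_neg (lt_asymm hab), Fin.pairCompl_comm hab.ne,
    ← tmul_add, add_comm (b : ℕ)]
  congr 1
  ring

theorem koszul_cycle_iff_minors (n : ℕ) (I : Ideal (MvPolynomial σ k))
    (x y : Fin (n + 2) → linForms k σ) (hx : LinearIndependent k x) :
    (TensorProduct.map (LinearMap.id)
        (Submodule.mkQ (Submodule.restrictScalars k (I : Submodule (MvPolynomial σ k)
          (MvPolynomial σ k))))) (koszulOfOmega n x y) = 0 ↔
      ∀ i j : Fin (n + 2), i < j →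
        (x i : MvPolynomial σ k) * (y j : MvPolynomial σ k) -
          (x j : MvPolynomial σ k) * (y i : MvPolynomial σ k) ∈ I := by
  have hwedges := (ExteriorAlgebra.ιMulti_family_linearIndependent_field (n := n) hx).comp _
    Fin.pairCompl_injective
  simp only [koszulOfOmega_eq_sum_minors, map_sum, map_tmul, LinearMap.id_apply]
  refine (sum_tmul_eq_zero_iff_of_linearIndependent hwedges _).trans ?_
  simp only [Submodule.mkQ_apply, Submodule.Quotient.mk_eq_zero, Submodule.restrictScalars_mem,
    Ideal.unit_mul_mem_iff_mem _ (isUnit_neg_one.pow _), Subtype.forall, Prod.forall]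

end
end

section
/- Let S = Sym(V) be a polynomial ring over a field k, I ⊆ S an ideal, and let x_1,…,x_{n+3} ∈ V be linearly independent and y_{ij} ∈ V (1 ≤ i < j ≤ n+3) arbitrary linear forms. Set x_{îĵ} equal to the wedge of x_1,…,x_{n+3} omitting x_i and x_j, and ω = Σ_{1≤i<j≤n+3} (−1)^{i+j} x_{îĵ} ⊗ y_{ij} ∈ Λ^{n+1}V ⊗ V. Then the image of the Koszul differential ∂(ω) in Λ^n V ⊗ (S/I)_2 is zero if and only if y_{ij}x_k − y_{ik}x_j + y_{jk}x_i ∈ I for all 1 ≤ i < j < k ≤ n+3. -/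
/-!
STATEMENT 16: Let `S` be a polynomial ring over a field `k`, `V = S₁`, `I ⊆ S` an
ideal, `x₁,…,x_{n+3} ∈ V` linearly independent and `y_{ij} ∈ V` (`i < j`) arbitrary.
For `ω = Σ_{i<j} (−1)^{i+j} x_{îĵ} ⊗ y_{ij} ∈ Λ^{n+1}V ⊗ V` (where `x_{îĵ}` is the
wedge of the `x`'s omitting `xᵢ` and `xⱼ`), the Koszul differential `∂(ω)` maps to
zero in `Λ^n V ⊗ (S/I)₂` if and only if
`y_{ij} x_l − y_{il} x_j + y_{jl} x_i ∈ I` for all `i < j < l`.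
-/

open MvPolynomial TensorProduct

set_option synthInstance.maxHeartbeats 1000000
set_option maxHeartbeats 1000000

noncomputable section

variable {k : Type*} [Field k] {σ : Type*}

/-- The strictly monotone embedding `Fin (n+1) → Fin (n+3)` omitting `i` and `j`
(for `i < j`). -/
def omit2 {n : ℕ} (i j : Fin (n + 3)) (h : i < j) : Fin (n + 1) → Fin (n + 3) :=
  fun t => j.succAbove ((Fin.castLT i
    (by have h1 : (i : ℕ) < (j : ℕ) := h; have h2 := j.isLt; omega)).succAbove t)

/-- The Koszul differential of `ω = Σ_{i<j} (−1)^{i+j} x_{îĵ} ⊗ y_{ij}`. -/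
def koszulOfOmegaPf (n : ℕ) (x : Fin (n + 3) → linForms k σ)
    (y : Fin (n + 3) → Fin (n + 3) → linForms k σ) :
    ExteriorAlgebra k (linForms k σ) ⊗[k] MvPolynomial σ k :=
  ∑ i : Fin (n + 3), ∑ j : Fin (n + 3),
    if h : i < j then
      ((-1 : ℤ) ^ ((i : ℕ) + (j : ℕ))) •
        koszulOfDecomp n (fun t => x (omit2 i j h t)) (y i j)
    else 0

/-!
Each summand `±x_{îĵ} ⊗ y_{ij}` of `ω` contributes, for every `l ∉ {i, j}`, a term
`±x_{îĵl̂} ⊗ x_l y_{ij}` to `∂ω`. Grouping these by the set `{i, j, l} = {a < b < c}` gives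
`∂ω = Σ_{a<b<c} (−1)^{a+b+c} x_{âb̂ĉ} ⊗ (y_{ab} x_c − y_{ac} x_b + y_{bc} x_a)`.
The wedges `x_{âb̂ĉ}` are linearly independent, since a linear map sending the `x`'s to the
standard basis of `k^{n+3}` sends them to distinct basis vectors of its exterior algebra; and over a
field, `Σ_t e_t ⊗ q_t = 0` with linearly independent `e_t` forces every `q_t = 0`. So `∂ω` vanishes
modulo `I` exactly when every Pfaffian lies in `I`.
-/

theorem Fin.val_succAbove_eq_add_ite {m : ℕ} (p : Fin (m + 1)) (t : Fin m) :
    (p.succAbove t : ℕ) = t + if p < p.succAbove t then 1 else 0 := by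
  rcases Fin.castSucc_lt_or_lt_succ p t with h | h
  · rw [Fin.succAbove_of_castSucc_lt p t h, if_neg (not_lt.mpr h.le)]; rfl
  · rw [Fin.succAbove_of_lt_succ p t h, if_pos h]; rfl

theorem Fin.val_lt_of_lt {m : ℕ} {i j : Fin (m + 1)} (h : i < j) : (i : ℕ) < m :=
  Fin.val_lt_last (h.trans_le (Fin.le_last j)).ne

theorem Fin.succAbove_castLT_of_lt {m : ℕ} {i p : Fin (m + 1)} (h : i < p) (hi : (i : ℕ) < m) :
    p.succAbove (i.castLT hi) = i :=
  Fin.succAbove_of_castSucc_lt p _ h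

theorem neg_one_pow_zsmul_eq_zero_iff {G : Type*} [AddCommGroup G] (m : ℕ) (v : G) :
    ((-1 : ℤ) ^ m) • v = 0 ↔ v = 0 := by
  rcases neg_one_pow_eq_or ℤ m with h | h <;> simp [h]

namespace ExteriorAlgebra

variable (R : Type*) [CommRing R] {M N : Type*} [AddCommGroup M] [Module R M]
  [AddCommGroup N] [Module R N] {ι : Type*} [LinearOrder ι]

def ιMultiFinset (x : ι → M) (s : Finset ι) : ExteriorAlgebra R M :=
  ιMulti R s.card (x ∘ s.orderEmbOfFin rfl)

variable {R}

theorem ιMulti_comp_orderEmbOfFin (x : ι → M) {s : Finset ι} {m : ℕ} (h : s.card = m) :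
    ιMulti R m (x ∘ s.orderEmbOfFin h) = ιMultiFinset R x s := by
  subst h; rfl

theorem ιMulti_comp_eq_ιMultiFinset (x : ι → M) {s : Finset ι} {m : ℕ} (h : s.card = m)
    {f : Fin m → ι} (hf : StrictMono f) (hfs : ∀ t, f t ∈ s) :
    ιMulti R m (x ∘ f) = ιMultiFinset R x s := by
  rw [Finset.orderEmbOfFin_unique h hfs hf, ιMulti_comp_orderEmbOfFin]

theorem map_ιMultiFinset (g : M →ₗ[R] N) (x : ι → M) (s : Finset ι) :
    map g (ιMultiFinset R x s) = ιMultiFinset R (g ∘ x) s := by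
  rw [ιMultiFinset, map_apply_ιMulti]; rfl

theorem basis_eq_ιMultiFinset (b : Module.Basis ι R M) (s : Finset ι) :
    b.ExteriorAlgebra s = ιMultiFinset R b s := by
  rw [basis_apply]; rfl

end ExteriorAlgebra

section LinearIndependent

variable {K M N ι : Type*} [Field K] [AddCommGroup M] [Module K M] [AddCommGroup N] [Module K N]

theorem LinearIndependent.ιMultiFinset [LinearOrder ι] {x : ι → M}
    (hx : LinearIndependent K x) : LinearIndependent K (ExteriorAlgebra.ιMultiFinset K x) := by
  obtain ⟨r, hr⟩ := LinearMap.exists_leftInverse_of_injective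
    (Submodule.span K (Set.range x)).subtype (Submodule.ker_subtype _)
  set g := hx.repr ∘ₗ r
  have hgx : g ∘ x = Finsupp.basisSingleOne := by
    ext1 i
    exact hx.repr_eq_single i _
      (congrArg Subtype.val (LinearMap.congr_fun hr ⟨x i, Submodule.subset_span ⟨i, rfl⟩⟩))
  have hmap : (ExteriorAlgebra.map g).toLinearMap ∘ ExteriorAlgebra.ιMultiFinset K x =
      Finsupp.basisSingleOne.ExteriorAlgebra := by
    ext1 s
    rw [Function.comp_apply, AlgHom.toLinearMap_apply, ExteriorAlgebra.map_ιMultiFinset, hgx,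
      ExteriorAlgebra.basis_eq_ιMultiFinset]
  exact .of_comp (ExteriorAlgebra.map g).toLinearMap (hmap ▸ Module.Basis.linearIndependent _)

theorem LinearIndependent.sum_tmul_eq_zero_iff [Fintype ι] {e : ι → M}
    (he : LinearIndependent K e) (q : ι → N) :
    ∑ i, e i ⊗ₜ[K] q i = 0 ↔ q = 0 := by
  classical
  have hsum : ∑ i, e i ⊗ₜ[K] q i =
      (Finsupp.linearCombination K e).rTensor N (∑ i, Finsupp.single i 1 ⊗ₜ q i) := by
    simp
  have hfin : finsuppScalarLeft K N ι (∑ i, Finsupp.single i 1 ⊗ₜ q i) =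
      Finsupp.equivFunOnFinite.symm q := by
    ext j
    simp [finsuppScalarLeft_apply_tmul, Finsupp.single_apply]
  rw [hsum, map_eq_zero_iff _ (Module.Flat.rTensor_preserves_injective_linearMap _ he),
    ← (finsuppScalarLeft K N ι).map_eq_zero_iff, hfin, Equiv.symm_apply_eq]
  rfl

theorem LinearIndepOn.sum_tmul_eq_zero_iff {e : ι → M} {s : Finset ι}
    (he : LinearIndepOn K e s) (q : ι → N) :
    ∑ i ∈ s, e i ⊗ₜ[K] q i = 0 ↔ ∀ i ∈ s, q i = 0 := by
  rw [← Finset.sum_coe_sort s]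
  simpa [funext_iff] using LinearIndependent.sum_tmul_eq_zero_iff he (fun i : s => q i)

end LinearIndependent

section sortedTriples

variable {α : Type*} [Fintype α] [LinearOrder α]

variable (α) in
def sortedTriples : Finset (α × α × α) :=
  {p | p.1 < p.2.1 ∧ p.2.1 < p.2.2}

theorem Fintype.sum_sum_sum_eq_sum_sortedTriples {β : Type*} [AddCommMonoid β]
    (F : α → α → α → β) (hF : ∀ i j l, ¬(i < j ∧ l ≠ i ∧ l ≠ j) → F i j l = 0) :
    ∑ i, ∑ j, ∑ l, F i j l =
      ∑ p ∈ sortedTriples α, (F p.1 p.2.1 p.2.2 + F p.1 p.2.2 p.2.1 + F p.2.1 p.2.2 p.1) := by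
  have hsplit : ∀ i j l, F i j l = (if i < j ∧ j < l then F i j l else 0) +
      (if i < l ∧ l < j then F i j l else 0) + (if l < i ∧ i < j then F i j l else 0) := by
    intro i j l
    by_cases h : i < j ∧ l ≠ i ∧ l ≠ j
    · split_ifs <;> grind
    · simp [hF i j l h]
  have hB : ∑ i, ∑ j, ∑ l, (if i < l ∧ l < j then F i j l else 0) =
      ∑ a, ∑ b, ∑ c, (if a < b ∧ b < c then F a c b else 0) :=
    Fintype.sum_congr _ _ fun _ => Finset.sum_comm
  have hC : ∑ i, ∑ j, ∑ l, (if l < i ∧ i < j then F i j l else 0) =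
      ∑ a, ∑ b, ∑ c, (if a < b ∧ b < c then F b c a else 0) := by
    calc _ = ∑ i, ∑ l, ∑ j, (if l < i ∧ i < j then F i j l else 0) :=
          Fintype.sum_congr _ _ fun _ => Finset.sum_comm
      _ = _ := Finset.sum_comm
  simp_rw [sortedTriples, Finset.sum_filter, Fintype.sum_prod_type, ite_add_zero,
    Finset.sum_add_distrib, ← hB, ← hC, ← Finset.sum_add_distrib, ← hsplit]

theorem injOn_triple_sortedTriples :
    Set.InjOn (fun p : α × α × α => ({p.1, p.2.1, p.2.2} : Finset α)) (sortedTriples α) := by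
  rintro ⟨a, b, c⟩ hp ⟨a', b', c'⟩ hp' heq
  simp only [sortedTriples, Finset.coe_filter, Finset.mem_univ, true_and, Set.mem_ofPred_eq]
    at hp hp'
  have hmem : ∀ z, z = a ∨ z = b ∨ z = c ↔ z = a' ∨ z = b' ∨ z = c' := by
    simpa using Finset.ext_iff.mp heq
  grind [hmem a, hmem b, hmem c, hmem a', hmem b', hmem c']

theorem LinearIndependent.linearIndepOn_ιMultiFinset_compl_sortedTriples {K M : Type*} [Field K]
    [AddCommGroup M] [Module K M] {x : α → M} (hx : LinearIndependent K x) :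
    LinearIndepOn K (fun p : α × α × α => ExteriorAlgebra.ιMultiFinset K x {p.1, p.2.1, p.2.2}ᶜ)
      (sortedTriples α) := by
  have hinj : Set.InjOn (fun p : α × α × α => ({p.1, p.2.1, p.2.2}ᶜ : Finset α))
      (sortedTriples α) :=
    compl_injective.comp_injOn injOn_triple_sortedTriples
  exact (hx.ιMultiFinset.linearIndepOn _).comp_of_image hinj

end sortedTriples

section omit2

variable {n : ℕ} {i j : Fin (n + 3)} (h : i < j)

theorem omit2_strictMono : StrictMono (omit2 i j h) :=
  (Fin.strictMono_succAbove j).comp (Fin.strictMono_succAbove _)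

theorem omit2_ne_left (t : Fin (n + 1)) : omit2 i j h t ≠ i := by
  conv_rhs => rw [← Fin.succAbove_castLT_of_lt h (Fin.val_lt_of_lt h)]
  exact (Fin.succAbove_right_injective).ne (Fin.succAbove_ne _ t)

theorem omit2_ne_right (t : Fin (n + 1)) : omit2 i j h t ≠ j :=
  Fin.succAbove_ne j _

theorem exists_omit2_eq {l : Fin (n + 3)} (hi : l ≠ i) (hj : l ≠ j) :
    ∃ t, omit2 i j h t = l := by
  obtain ⟨u, rfl⟩ := Fin.exists_succAbove_eq hj
  have hu : u ≠ i.castLT (Fin.val_lt_of_lt h) := by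
    rintro rfl
    exact hi (Fin.succAbove_castLT_of_lt h _)
  obtain ⟨t, rfl⟩ := Fin.exists_succAbove_eq hu
  exact ⟨t, rfl⟩

theorem val_omit2_eq_add (t : Fin (n + 1)) :
    (omit2 i j h t : ℕ) = t + (if i < omit2 i j h t then 1 else 0) +
      (if j < omit2 i j h t then 1 else 0) := by
  have hlt := (Fin.strictMono_succAbove j).lt_iff_lt (a := i.castLT (Fin.val_lt_of_lt h))
    (b := (i.castLT (Fin.val_lt_of_lt h)).succAbove t)
  rw [Fin.succAbove_castLT_of_lt h] at hlt
  have ho : (omit2 i j h t : ℕ) = _ := Fin.val_succAbove_eq_add_ite j _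
  rw [ho, Fin.val_succAbove_eq_add_ite (i.castLT _) t]
  simp only [← hlt]
  rfl

end omit2

section Koszul

open ExteriorAlgebra

variable {n : ℕ} (x : Fin (n + 3) → linForms k σ) (y : Fin (n + 3) → Fin (n + 3) → linForms k σ)

/-- The `4 × 4` Pfaffian on rows and columns `0, a, b, c` of the skew-symmetric matrix with first
row `(0, x)` and remaining entries `y`. -/
def pfaffian4 (a b c : Fin (n + 3)) : MvPolynomial σ k :=
  (y a b : MvPolynomial σ k) * x c - (y a c : MvPolynomial σ k) * x b +
    (y b c : MvPolynomial σ k) * x a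

/-- The term of `∂ω` coming from the summand `(i, j)` of `ω` by removing `x_l` from `x_{îĵ}`. Its
sign is `(−1)^{i+j}` times `(−1)^t`, where `t = l − [i < l] − [j < l]` is the position of `l`
in the complement of `{i, j}`. -/
def koszulTerm (i j l : Fin (n + 3)) : ExteriorAlgebra k (linForms k σ) ⊗[k] MvPolynomial σ k :=
  if i < j ∧ l ≠ i ∧ l ≠ j then
    ((-1 : ℤ) ^ ((i : ℕ) + j + l + (if i < l then 1 else 0) + (if j < l then 1 else 0))) •
      (ιMultiFinset k x {i, j, l}ᶜ ⊗ₜ[k] ((x l : MvPolynomial σ k) * y i j))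
  else 0

theorem card_compl_triple {i j l : Fin (n + 3)} (hij : i ≠ j) (hil : i ≠ l) (hjl : j ≠ l) :
    ({i, j, l}ᶜ : Finset (Fin (n + 3))).card = n := by
  rw [Finset.card_compl, Finset.card_eq_three.mpr ⟨i, j, l, hij, hil, hjl, rfl⟩, Fintype.card_fin]
  rfl

variable {x y}

theorem koszulTerm_omit2 {i j : Fin (n + 3)} (h : i < j) (t : Fin (n + 1)) :
    koszulTerm x y i j (omit2 i j h t) = ((-1 : ℤ) ^ ((i : ℕ) + j)) • ((-1 : ℤ) ^ (t : ℕ)) •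
      (ιMulti k n (fun s => x (omit2 i j h (t.succAbove s))) ⊗ₜ[k]
        ((x (omit2 i j h t) : MvPolynomial σ k) * y i j)) := by
  have hne := omit2_ne_left h t
  have hne' := omit2_ne_right h t
  have hwedge : ιMulti k n (fun s => x (omit2 i j h (t.succAbove s))) =
      ιMultiFinset k x {i, j, omit2 i j h t}ᶜ := by
    refine ιMulti_comp_eq_ιMultiFinset x (card_compl_triple h.ne hne.symm hne'.symm)
      ((omit2_strictMono h).comp (Fin.strictMono_succAbove t)) fun s => ?_
    simp only [Finset.mem_compl, Finset.mem_insert, Finset.mem_singleton, not_or]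
    exact ⟨omit2_ne_left h _, omit2_ne_right h _,
      (omit2_strictMono h).injective.ne (Fin.succAbove_ne t s)⟩
  have hval := val_omit2_eq_add h t
  rw [koszulTerm, if_pos ⟨h, hne, hne'⟩, hwedge, smul_smul, ← pow_add]
  rw [neg_one_pow_eq_pow_mod_two, neg_one_pow_eq_pow_mod_two (n := (i : ℕ) + j + t)]
  congr 2
  omega

theorem smul_koszulOfDecomp_omit2 {i j : Fin (n + 3)} (h : i < j) :
    ((-1 : ℤ) ^ ((i : ℕ) + j)) • koszulOfDecomp n (fun t => x (omit2 i j h t)) (y i j) =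
      ∑ l, koszulTerm x y i j l := by
  rw [koszulOfDecomp, Finset.smul_sum]
  refine Fintype.sum_of_injective (omit2 i j h) (omit2_strictMono h).injective _ _ ?_
    fun t => (koszulTerm_omit2 h t).symm
  rintro l hl
  rw [koszulTerm, if_neg]
  rintro ⟨-, hi, hj⟩
  exact hl (exists_omit2_eq h hi hj)

theorem koszulOfOmegaPf_eq_sum_koszulTerm :
    koszulOfOmegaPf n x y = ∑ i, ∑ j, ∑ l, koszulTerm x y i j l := by
  refine Fintype.sum_congr _ _ fun i => Fintype.sum_congr _ _ fun j => ?_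
  split_ifs with h
  · exact smul_koszulOfDecomp_omit2 h
  · exact (Finset.sum_eq_zero fun l _ => if_neg fun hc => h hc.1).symm

theorem koszulTerm_add_add {a b c : Fin (n + 3)} (hab : a < b) (hbc : b < c) :
    koszulTerm x y a b c + koszulTerm x y a c b + koszulTerm x y b c a =
      ((-1 : ℤ) ^ ((a : ℕ) + b + c)) • (ιMultiFinset k x {a, b, c}ᶜ ⊗ₜ[k] pfaffian4 x y a b c) := by
  have hac := hab.trans hbc
  have hacb : ({a, c, b} : Finset (Fin (n + 3))) = {a, b, c} := by
    rw [Finset.pair_comm]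
  have hbca : ({b, c, a} : Finset (Fin (n + 3))) = {a, b, c} := by
    rw [Finset.pair_comm, Finset.insert_comm, Finset.pair_comm]
  simp only [koszulTerm, hacb, hbca, hab, hbc, hac, hab.ne', hbc.ne', hac.ne', hab.ne, hbc.ne,
    hac.ne, hab.not_gt, hbc.not_gt, hac.not_gt, ne_eq, not_false_eq_true, and_self, if_true,
    if_false]
  rw [show (a : ℕ) + c + b + 1 + 0 = a + b + c + 1 by omega,
    show (b : ℕ) + c + a + 0 + 0 = a + b + c by omega]
  simp only [pow_succ, mul_neg_one, neg_neg, neg_smul, pfaffian4, tmul_add, tmul_sub, smul_add,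
    smul_sub, mul_comm (y _ _ : MvPolynomial σ k)]
  abel

theorem koszulOfOmegaPf_eq_sum_sortedTriples :
    koszulOfOmegaPf n x y = ∑ p ∈ sortedTriples (Fin (n + 3)),
      ((-1 : ℤ) ^ ((p.1 : ℕ) + p.2.1 + p.2.2)) •
        (ιMultiFinset k x {p.1, p.2.1, p.2.2}ᶜ ⊗ₜ[k] pfaffian4 x y p.1 p.2.1 p.2.2) := by
  rw [koszulOfOmegaPf_eq_sum_koszulTerm,
    Fintype.sum_sum_sum_eq_sum_sortedTriples (koszulTerm x y) fun i j l h => if_neg h]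
  refine Finset.sum_congr rfl fun p hp => ?_
  obtain ⟨hab, hbc⟩ := (Finset.mem_filter.mp hp).2
  exact koszulTerm_add_add hab hbc

end Koszul

theorem koszul_cycle_iff_pfaffian_relations (n : ℕ) (I : Ideal (MvPolynomial σ k))
    (x : Fin (n + 3) → linForms k σ) (y : Fin (n + 3) → Fin (n + 3) → linForms k σ)
    (hx : LinearIndependent k x) :
    (TensorProduct.map (LinearMap.id)
        (Submodule.mkQ (Submodule.restrictScalars k (I : Submodule (MvPolynomial σ k)
          (MvPolynomial σ k))))) (koszulOfOmegaPf n x y) = 0 ↔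
      ∀ i j l : Fin (n + 3), i < j → j < l →
        (y i j : MvPolynomial σ k) * (x l : MvPolynomial σ k) -
          (y i l : MvPolynomial σ k) * (x j : MvPolynomial σ k) +
          (y j l : MvPolynomial σ k) * (x i : MvPolynomial σ k) ∈ I := by
  rw [koszulOfOmegaPf_eq_sum_sortedTriples, map_sum]
  simp only [map_zsmul, map_tmul, LinearMap.id_apply, ← tmul_smul]
  rw [hx.linearIndepOn_ιMultiFinset_compl_sortedTriples.sum_tmul_eq_zero_iff]
  simp only [sortedTriples, Finset.mem_filter, Finset.mem_univ, true_and, Prod.forall, and_imp,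
    Submodule.mkQ_apply, neg_one_pow_zsmul_eq_zero_iff, Submodule.Quotient.mk_eq_zero,
    Submodule.restrictScalars_mem, pfaffian4]

end
end
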